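/- arXiv:1702.03850 — 8 statements merged into one kernel-verified Lean document; each statement's English description precedes it below -/
import Mathlib

section
/- Every inductively monothetic locally compact Hausdorff topological group is abelian and σ-compact (i.e., it is the union of countably many compact subsets). -/
/-!
Any two elements lie in the closure of a cyclic subgroup, and in a Hausdorff group the closure
of a commutative set is commutative. For σ-compactness, let `H` be the subgroup generated by a
compact identity neighbourhood: it is open and σ-compact. Every finite subset of the discrete
group `G ⧸ H` lies in a cyclic subgroup, and such a locally cyclic group is countable because its
`n`-torsion has at most `n` elements. Hence `G` is a countable union of translates of `H`.
-/

/-- A topological group `G` is *inductively monothetic* if for every finite subset `F` of `G`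
there exists `g ∈ G` such that the closure of the subgroup generated by `F` equals the
closure of the cyclic subgroup generated by `g`. -/
def InductivelyMonothetic (G : Type*) [Group G] [TopologicalSpace G] : Prop :=
  ∀ F : Finset G, ∃ g : G,
    closure ((Subgroup.closure (F : Set G) : Subgroup G) : Set G) =
      closure ((Subgroup.zpowers g : Subgroup G) : Set G)

open Set Finset Pointwise

theorem closure_subset_centralizer_closure {M : Type*} [Mul M] [TopologicalSpace M]
    [SeparatelyContinuousMul M] [T2Space M] {s : Set M} (hs : s ⊆ s.centralizer) :
    closure s ⊆ (closure s).centralizer := by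
  have h₁ : closure s ⊆ s.centralizer := closure_minimal hs (isClosed_centralizer s)
  have h₂ : s ⊆ (closure s).centralizer := fun x hx y hy => (h₁ hy x hx).symm
  exact closure_minimal h₂ (isClosed_centralizer _)

theorem InductivelyMonothetic.isMulCommutative {G : Type*} [Group G] [TopologicalSpace G]
    [SeparatelyContinuousMul G] [T2Space G] (h : InductivelyMonothetic G) :
    IsMulCommutative G := by
  classical
  refine ⟨⟨fun a b => ?_⟩⟩
  obtain ⟨g, hg⟩ := h {a, b}
  have hmem : ∀ x ∈ ({a, b} : Finset G), x ∈ closure (Subgroup.zpowers g : Set G) :=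
    fun x hx => hg ▸ subset_closure (Subgroup.subset_closure (by simpa using hx))
  have hcomm : (Subgroup.zpowers g : Set G) ⊆ (Subgroup.zpowers g : Set G).centralizer := by
    rintro _ ⟨i, rfl⟩ _ ⟨j, rfl⟩
    exact (Commute.zpow_zpow_self g j i).eq
  exact closure_subset_centralizer_closure hcomm (hmem b (by simp)) a (hmem a (by simp))

/-- Equivalently, every finitely generated subgroup is cyclic. -/
def IsLocallyCyclic (Q : Type*) [Group Q] : Prop :=
  ∀ s : Finset Q, ∃ q : Q, (s : Set Q) ⊆ Subgroup.zpowers q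

namespace IsLocallyCyclic

variable {Q : Type*} [Group Q]

theorem commute (hQ : IsLocallyCyclic Q) (a b : Q) : Commute a b := by
  classical
  obtain ⟨q, hq⟩ := hQ {a, b}
  obtain ⟨i, rfl⟩ := hq (by simp : a ∈ (({a, b} : Finset Q) : Set Q))
  obtain ⟨j, rfl⟩ := hq (by simp : b ∈ (({_, b} : Finset Q) : Set Q))
  exact Commute.zpow_zpow_self q i j

theorem card_le_of_forall_pow_eq_one (hQ : IsLocallyCyclic Q) {n : ℕ} (hn : 0 < n)
    (s : Finset Q) (hs : ∀ x ∈ s, x ^ n = 1) : s.card ≤ n := by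
  classical
  obtain ⟨q, hq⟩ := hQ s
  by_cases hfin : IsOfFinOrder q
  · have : Finite (Subgroup.zpowers q) := hfin.finite_zpowers.to_subtype
    have : Fintype (Subgroup.zpowers q) := Fintype.ofFinite _
    calc s.card = (s.subtype (· ∈ Subgroup.zpowers q)).card := by
          rw [card_subtype, filter_true_of_mem fun x hx => SetLike.mem_coe.1 (hq hx)]
      _ ≤ #{y : Subgroup.zpowers q | y ^ n = 1} :=
          Finset.card_le_card fun y hy => by
            simpa [Subtype.ext_iff] using hs y (Finset.mem_subtype.1 hy)
      _ ≤ n := IsCyclic.card_pow_eq_one_le hn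
  · have hs_eq_one : ∀ x ∈ s, x = 1 := by
      intro x hx
      obtain ⟨k, rfl⟩ := hq hx
      by_contra hk
      refine hfin (isOfFinOrder_iff_zpow_eq_one.2 ⟨k * n, ?_, ?_⟩)
      · exact mul_ne_zero (by rintro rfl; simp at hk) (by exact_mod_cast hn.ne')
      · simpa [zpow_mul] using hs _ hx
    exact (card_le_one.2 fun x hx y hy => (hs_eq_one x hx).trans (hs_eq_one y hy).symm).trans hn

theorem finite_setOf_pow_eq_one (hQ : IsLocallyCyclic Q) {n : ℕ} (hn : 0 < n) :
    {x : Q | x ^ n = 1}.Finite := by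
  by_contra hinf
  obtain ⟨s, hs, hcard⟩ := Set.Infinite.exists_subset_card_eq hinf (n + 1)
  have := hQ.card_le_of_forall_pow_eq_one hn s fun x hx => hs hx
  omega

theorem countable (hQ : IsLocallyCyclic Q) : Countable Q := by
  classical
  rcases subsingleton_or_nontrivial Q with _ | _
  · infer_instance
  -- Fix `a ≠ 1`. Every `x` has a positive power in `⟨a⟩`, and the solutions of `x ^ N = a ^ m`
  -- form a translate of the `N`-torsion, which is finite.
  obtain ⟨a, ha⟩ := exists_ne (1 : Q)
  have hroot : ∀ x : Q, ∃ N : ℕ, 0 < N ∧ ∃ m : ℤ, x ^ N = a ^ m := by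
    intro x
    obtain ⟨q, hq⟩ := hQ {x, a}
    obtain ⟨k, rfl⟩ := hq (by simp : x ∈ (({x, a} : Finset Q) : Set Q))
    obtain ⟨n, rfl⟩ := hq (by simp : a ∈ (({_, a} : Finset Q) : Set Q))
    have hn : n ≠ 0 := by rintro rfl; simp at ha
    refine ⟨(n * n).natAbs, Int.natAbs_pos.2 (mul_ne_zero hn hn), k * n, ?_⟩
    dsimp only
    rw [← zpow_natCast, Int.natCast_natAbs, abs_mul_self, ← zpow_mul, ← zpow_mul]
    ring_nf
  have hfiber : ∀ (N : ℕ) (m : ℤ), {x : Q | 0 < N ∧ x ^ N = a ^ m}.Finite := by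
    intro N m
    rcases Set.eq_empty_or_nonempty {x : Q | 0 < N ∧ x ^ N = a ^ m} with he | ⟨x₀, hN, hx₀⟩
    · simp [he]
    refine ((hQ.finite_setOf_pow_eq_one hN).image (x₀ * ·)).subset fun x ⟨_, hx⟩ => ?_
    refine ⟨x₀⁻¹ * x, ?_, mul_inv_cancel_left x₀ x⟩
    rw [mem_ofPred_eq, (hQ.commute _ _).mul_pow, inv_pow, hx₀, hx, inv_mul_cancel]
  have hcover : (univ : Set Q) ⊆ ⋃ (N : ℕ) (m : ℤ), {x : Q | 0 < N ∧ x ^ N = a ^ m} := by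
    intro x _
    obtain ⟨N, hN, m, hm⟩ := hroot x
    exact mem_iUnion₂.2 ⟨N, m, hN, hm⟩
  exact countable_univ_iff.1 <|
    (countable_iUnion fun N => countable_iUnion fun m => (hfiber N m).countable).mono hcover

end IsLocallyCyclic

theorem InductivelyMonothetic.isLocallyCyclic_of_surjective {G D : Type*} [Group G]
    [TopologicalSpace G] [Group D] [TopologicalSpace D] [DiscreteTopology D]
    (h : InductivelyMonothetic G) (f : G →* D) (hf : Continuous f)
    (hsurj : Function.Surjective f) : IsLocallyCyclic D := by
  classical
  intro s
  obtain ⟨g, hg⟩ := h (s.image (Function.surjInv hsurj))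
  refine ⟨f g, fun d hd => ?_⟩
  have hle : closure (Subgroup.zpowers g : Set G) ⊆ f ⁻¹' Subgroup.zpowers (f g) :=
    closure_minimal (Subgroup.zpowers_le (H := (Subgroup.zpowers (f g)).comap f).2
      (Subgroup.mem_zpowers _)) ((isClosed_discrete _).preimage hf)
  have hmem : Function.surjInv hsurj d ∈ closure (Subgroup.zpowers g : Set G) :=
    hg ▸ subset_closure (Subgroup.subset_closure (by simpa using ⟨d, hd, rfl⟩))
  simpa [Function.surjInv_eq] using hle hmem

theorem IsCompact.pow {M : Type*} [Monoid M] [TopologicalSpace M] [ContinuousMul M] {K : Set M}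
    (hK : IsCompact K) (n : ℕ) : IsCompact (K ^ n) := by
  induction n with
  | zero => simp
  | succ n ih => rw [pow_succ]; exact ih.mul hK

theorem isSigmaCompact_submonoidClosure {M : Type*} [Monoid M] [TopologicalSpace M]
    [ContinuousMul M] {K : Set M} (hK : IsCompact K) :
    IsSigmaCompact (Submonoid.closure K : Set M) := by
  have hunion : (Submonoid.closure K : Set M) = ⋃ n : ℕ, insert 1 K ^ n := by
    refine Subset.antisymm (fun x hx => ?_) (iUnion_subset fun n =>
      Submonoid.pow_subset (insert_subset (one_mem _) Submonoid.subset_closure))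
    induction hx using Submonoid.closure_induction with
    | mem x hx => exact mem_iUnion.2 ⟨1, by simp [hx]⟩
    | one => exact mem_iUnion.2 ⟨0, by simp⟩
    | mul x y _ _ hx hy =>
      obtain ⟨m, hm⟩ := mem_iUnion.1 hx
      obtain ⟨n, hn⟩ := mem_iUnion.1 hy
      exact mem_iUnion.2 ⟨m + n, pow_add (insert 1 K) m n ▸ Set.mul_mem_mul hm hn⟩
  rw [hunion]
  exact isSigmaCompact_iUnion_of_isCompact _ fun n => (hK.insert 1).pow n

theorem isSigmaCompact_subgroupClosure {G : Type*} [Group G] [TopologicalSpace G]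
    [IsTopologicalGroup G] {K : Set G} (hK : IsCompact K) :
    IsSigmaCompact (Subgroup.closure K : Set G) := by
  have := isSigmaCompact_submonoidClosure (hK.union hK.inv)
  rwa [← Subgroup.closure_toSubmonoid] at this

theorem sigmaCompactSpace_of_countable_quotient {G : Type*} [Group G] [TopologicalSpace G]
    [ContinuousMul G] (H : Subgroup G) (hH : IsSigmaCompact (H : Set G)) [Countable (G ⧸ H)] :
    SigmaCompactSpace G := by
  have hcover : (univ : Set G) = ⋃ q : G ⧸ H, (q.out * ·) '' H := by
    refine (eq_univ_of_forall fun x : G => mem_iUnion.2 ⟨(x : G ⧸ H), ?_⟩).symm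
    exact ⟨(x : G ⧸ H).out⁻¹ * x, QuotientGroup.eq.1 (QuotientGroup.out_eq' _),
      mul_inv_cancel_left _ _⟩
  rw [← isSigmaCompact_univ_iff, hcover]
  exact isSigmaCompact_iUnion _ fun q => hH.image (continuous_const_mul _)

/-- Every inductively monothetic locally compact Hausdorff topological group is abelian
and σ-compact. -/
theorem stmt0 {G : Type*} [Group G] [TopologicalSpace G] [IsTopologicalGroup G]
    [LocallyCompactSpace G] [T2Space G]
    (h : InductivelyMonothetic G) :
    (∀ a b : G, a * b = b * a) ∧ SigmaCompactSpace G := by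
  -- commutativity makes every subgroup normal, so that `G ⧸ H` below is a group
  have := h.isMulCommutative
  obtain ⟨K, hK, hK1⟩ := exists_compact_mem_nhds (1 : G)
  let H := Subgroup.closure K
  have hHopen : IsOpen (H : Set G) :=
    H.isOpen_of_mem_nhds (Filter.mem_of_superset hK1 Subgroup.subset_closure)
  have := QuotientGroup.discreteTopology hHopen
  have := (h.isLocallyCyclic_of_surjective (QuotientGroup.mk' H) QuotientGroup.continuous_mk
    (QuotientGroup.mk'_surjective H)).countable
  exact ⟨mul_comm', sigmaCompactSpace_of_countable_quotient H (isSigmaCompact_subgroupClosure hK)⟩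
end

section
/- Let G be a locally compact Hausdorff totally disconnected topological group which is monothetic. Then G is inductively monothetic. -/
/-!
By van Dantzig's theorem `G` has a compact open subgroup `K`. If no nontrivial power of the
topological generator `g` lies in `K`, density of `⟨g⟩` forces `K = 1`: then `G` is discrete,
hence cyclic. Otherwise `g ^ m ∈ K` for some `m ≠ 0`, the translates `g ^ j • K` with
`0 ≤ j < |m|` cover `⟨g⟩`, and `G` is compact, i.e. profinite.

In the profinite case every quotient `G ⧸ U` by an open normal subgroup is cyclic, so a subgroup
`H` contains elements `x` with `H ≤ ⟨x⟩ ⊔ U`. For each `U` these `x` (taken in the closure of `H`)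
form a nonempty closed set, and the sets shrink with `U`; by compactness some `g` lies in all of
them, and it topologically generates the closure of `H` because a closed subgroup of a profinite
group is the intersection of the open subgroups containing it.
-/

open Set Topology Pointwise
open Subgroup (zpowers)

section

variable {G : Type*} [Group G]

theorem exists_mem_le_zpowers_sup (N : Subgroup G) [N.Normal] [IsCyclic (G ⧸ N)]
    (H : Subgroup G) : ∃ x ∈ H, H ≤ zpowers x ⊔ N := by
  obtain ⟨q, hq⟩ :=
    (H.map (QuotientGroup.mk' N)).isCyclic_iff_exists_zpowers_eq_top.1 inferInstance
  obtain ⟨x, hxH, rfl⟩ : q ∈ H.map (QuotientGroup.mk' N) := hq ▸ Subgroup.mem_zpowers q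
  refine ⟨x, hxH, ?_⟩
  rw [← QuotientGroup.ker_mk' N, ← Subgroup.comap_map_eq, ← Subgroup.map_le_iff_le_comap,
    MonoidHom.map_zpowers, hq]

variable [TopologicalSpace G] [IsTopologicalGroup G]

theorem isCyclic_quotient_of_dense_zpowers {g : G} (hd : Dense (zpowers g : Set G))
    (N : Subgroup G) [N.Normal] (hN : IsOpen (N : Set G)) : IsCyclic (G ⧸ N) := by
  have := QuotientGroup.discreteTopology hN
  have hdense := (QuotientGroup.mk'_surjective N).denseRange.dense_image
    QuotientGroup.continuous_mk hd
  rw [dense_discrete, ← Subgroup.coe_map, MonoidHom.map_zpowers] at hdense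
  exact isCyclic_iff_exists_zpowers_eq_top.2 ⟨_, SetLike.coe_set_eq.1 hdense⟩

theorem isClosed_setOf_le_zpowers_sup (H N : Subgroup G) [N.Normal] (hN : IsOpen (N : Set G)) :
    IsClosed {x : G | H ≤ zpowers x ⊔ N} := by
  have := QuotientGroup.discreteTopology hN
  have hpreimage : {x : G | H ≤ zpowers x ⊔ N} =
      QuotientGroup.mk' N ⁻¹' {q | H.map (QuotientGroup.mk' N) ≤ zpowers q} := by
    ext x
    simp only [mem_ofPred_eq, mem_preimage, Subgroup.map_le_iff_le_comap,
      ← MonoidHom.map_zpowers, Subgroup.comap_map_eq, QuotientGroup.ker_mk']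
  rw [hpreimage]
  exact (isClosed_discrete _).preimage QuotientGroup.continuous_mk

section Profinite

variable [CompactSpace G] [TotallyDisconnectedSpace G]

theorem le_of_forall_openNormalSubgroup_le_sup {H K : Subgroup G} (hK : IsClosed (K : Set G))
    (h : ∀ U : OpenNormalSubgroup G, H ≤ K ⊔ U) : H ≤ K := by
  refine (le_sInf fun N hN => ?_).trans
    (ProfiniteGrp.closedSubgroup_eq_sInf_open (⟨K, hK⟩ : ClosedSubgroup G)).ge
  obtain ⟨U, hU⟩ := ProfiniteGrp.exist_openNormalSubgroup_sub_open_nhds_of_one hN.1 N.one_mem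
  exact (h U).trans (sup_le hN.2 hU)

theorem exists_topologicalClosure_eq_zpowers
    (hcyc : ∀ U : OpenNormalSubgroup G, IsCyclic (G ⧸ (U : Subgroup G))) (H : Subgroup G) :
    ∃ g : G, H.topologicalClosure = (zpowers g).topologicalClosure := by
  let S : OpenNormalSubgroup G → Set G := fun U =>
    {x | x ∈ H.topologicalClosure ∧ H ≤ zpowers x ⊔ U}
  have hS_closed (U : OpenNormalSubgroup G) : IsClosed (S U) :=
    H.isClosed_topologicalClosure.inter (isClosed_setOf_le_zpowers_sup H U U.isOpen)
  have hS_nonempty (U : OpenNormalSubgroup G) : (S U).Nonempty := by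
    have := hcyc U
    obtain ⟨x, hxH, hx⟩ := exists_mem_le_zpowers_sup (U : Subgroup G) H
    exact ⟨x, H.le_topologicalClosure hxH, hx⟩
  have hS_directed : Directed (· ⊇ ·) S := fun U V =>
    ⟨U ⊓ V, fun x hx => ⟨hx.1, hx.2.trans (sup_le_sup_left inf_le_left _)⟩,
      fun x hx => ⟨hx.1, hx.2.trans (sup_le_sup_left inf_le_right _)⟩⟩
  let U₀ : OpenNormalSubgroup G := ⟨⊤, Subgroup.normal_top⟩
  have : Nonempty (OpenNormalSubgroup G) := ⟨U₀⟩
  obtain ⟨g, hg⟩ := IsCompact.nonempty_iInter_of_directed_nonempty_isCompact_isClosed S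
    hS_directed hS_nonempty (fun U => (hS_closed U).isCompact) hS_closed
  rw [mem_iInter] at hg
  have hgen := (zpowers g).isClosed_topologicalClosure
  refine ⟨g, le_antisymm ?_ ?_⟩
  · refine Subgroup.topologicalClosure_minimal _ ?_ hgen
    exact le_of_forall_openNormalSubgroup_le_sup hgen fun U =>
      (hg U).2.trans (sup_le_sup_right (zpowers g).le_topologicalClosure _)
  · exact Subgroup.topologicalClosure_minimal _ (Subgroup.zpowers_le.2 (hg U₀).1)
      H.isClosed_topologicalClosure

end Profinite

theorem exists_isCompact_openSubgroup [LocallyCompactSpace G] [T2Space G]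
    [TotallyDisconnectedSpace G] : ∃ K : OpenSubgroup G, IsCompact (K : Set G) := by
  obtain ⟨C, hCc, hC⟩ := exists_compact_mem_nhds (1 : G)
  obtain ⟨W, hW, h1W, hWC⟩ := loc_compact_Haus_tot_disc_of_zero_dim.mem_nhds_iff.1 hC
  have hWc : IsCompact W := hCc.of_isClosed_subset hW.isClosed hWC
  obtain ⟨T, hT, hTW⟩ := compact_open_separated_mul_left hWc hW.isOpen subset_rfl
  have hsmul_subset {x : G} (hx : x ∈ T) : x • W ⊆ W := (smul_set_subset_mul hx).trans hTW
  let K := MulAction.stabilizer G W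
  have hK : (K : Set G) ∈ 𝓝 1 :=
    Filter.mem_of_superset (Filter.inter_mem hT (inv_mem_nhds_one G hT)) fun x hx =>
      (hsmul_subset hx.1).antisymm (subset_smul_set_iff.2 (hsmul_subset hx.2))
  have hKW : (K : Set G) ⊆ W := fun x hx => by
    simpa [MulAction.mem_stabilizer_iff.1 hx] using smul_mem_smul_set (a := x) h1W
  have hKo := K.isOpen_of_mem_nhds hK
  exact ⟨⟨K, hKo⟩, hWc.of_isClosed_subset (K.isClosed_of_isOpen hKo) hKW⟩

theorem discreteTopology_of_isOpen_of_zpowers_inf_eq_bot [T1Space G] {g : G}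
    (hd : Dense (zpowers g : Set G)) {K : Subgroup G} (hK : IsOpen (K : Set G))
    (hgK : zpowers g ⊓ K = ⊥) : DiscreteTopology G := by
  refine discreteTopology_of_isOpen_singleton_one ?_
  have hK1 : (K : Set G) ⊆ {1} := by
    have := hd.open_subset_closure_inter hK
    rwa [← Subgroup.coe_inf, inf_comm, hgK, Subgroup.coe_bot, closure_singleton] at this
  rwa [← hK1.antisymm (singleton_subset_iff.2 K.one_mem)]

theorem compactSpace_of_isCompact_of_zpow_mem [T2Space G] {g : G}
    (hd : Dense (zpowers g : Set G)) {K : Subgroup G} (hK : IsCompact (K : Set G))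
    {m : ℤ} (hm : m ≠ 0) (hgm : g ^ m ∈ K) : CompactSpace G := by
  let C := ⋃ j ∈ Ico 0 |m|, g ^ j • (K : Set G)
  have hC : IsCompact C := (finite_Ico 0 |m|).isCompact_biUnion fun j _ => hK.smul _
  have hgC : (zpowers g : Set G) ⊆ C := by
    rintro _ ⟨k, rfl⟩
    refine mem_biUnion (x := k % m) ⟨Int.emod_nonneg k hm, Int.emod_lt_abs k hm⟩
      ⟨g ^ (m * (k / m)), by rw [zpow_mul]; exact K.zpow_mem hgm _, ?_⟩
    show g ^ (k % m) * g ^ (m * (k / m)) = g ^ k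
    rw [← zpow_add, Int.emod_add_mul_ediv]
  refine ⟨?_⟩
  rw [← hd.closure_eq]
  exact hC.of_isClosed_subset isClosed_closure (closure_minimal hgC hC.isClosed)

theorem compactSpace_or_discreteTopology_of_dense_zpowers [LocallyCompactSpace G] [T2Space G]
    [TotallyDisconnectedSpace G] {g : G} (hd : Dense (zpowers g : Set G)) :
    CompactSpace G ∨ DiscreteTopology G := by
  obtain ⟨K, hK⟩ := exists_isCompact_openSubgroup (G := G)
  rcases (zpowers g ⊓ K).bot_or_exists_ne_one with hgK | ⟨_, ⟨⟨m, rfl⟩, hmK⟩, hm1⟩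
  · exact .inr (discreteTopology_of_isOpen_of_zpowers_inf_eq_bot hd K.isOpen hgK)
  · have hm : m ≠ 0 := by rintro rfl; exact hm1 (zpow_zero g)
    exact .inl (compactSpace_of_isCompact_of_zpow_mem hd hK hm hmK)

end

/-- A locally compact Hausdorff totally disconnected monothetic topological group is
inductively monothetic. -/
theorem stmt1 {G : Type*} [Group G] [TopologicalSpace G] [IsTopologicalGroup G]
    [LocallyCompactSpace G] [T2Space G] [TotallyDisconnectedSpace G]
    (h : ∃ g : G, Dense ((Subgroup.zpowers g : Subgroup G) : Set G)) :
    InductivelyMonothetic G := by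
  obtain ⟨g₀, hd⟩ := h
  intro F
  rcases compactSpace_or_discreteTopology_of_dense_zpowers hd with hcompact | hdiscrete
  · have hcyc : ∀ U : OpenNormalSubgroup G, IsCyclic (G ⧸ (U : Subgroup G)) := fun U =>
      isCyclic_quotient_of_dense_zpowers hd (U : Subgroup G) U.isOpen
    obtain ⟨g, hg⟩ := exists_topologicalClosure_eq_zpowers hcyc (Subgroup.closure (F : Set G))
    refine ⟨g, ?_⟩
    rw [← Subgroup.topologicalClosure_coe, hg, Subgroup.topologicalClosure_coe]
  · have : IsCyclic G := isCyclic_iff_exists_zpowers_eq_top.2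
      ⟨g₀, SetLike.coe_set_eq.1 (dense_discrete.1 hd)⟩
    obtain ⟨g, hg⟩ :=
      (Subgroup.closure (F : Set G)).isCyclic_iff_exists_zpowers_eq_top.1 inferInstance
    exact ⟨g, by rw [hg]⟩
end

section
/- Let S be a set of prime numbers and for each prime p let n_p be a natural number. Consider the topological group G = ∏_p G_p, the product over all primes p with the product topology, where G_p is the additive group ℤ_p of p-adic integers (with its natural compact topology) if p ∈ S, and G_p is the finite discrete cyclic group ℤ/p^{n_p}ℤ if p ∉ S. Then G is monothetic: there exists g ∈ G whose cyclic subgroup is dense in G. -/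
instance (p : Nat.Primes) : Fact (Nat.Prime (p : ℕ)) := ⟨p.2⟩

/-! Each factor `G_p` has an element `g_p` (the image of `1`) such that every nonempty open
subset of `G_p` contains `k • g_p` for all `k` in some residue class modulo a power of `p`.
Given a basic open set of the product, which restricts only finitely many coordinates, the
Chinese remainder theorem produces one `k` lying in all the required residue classes at once,
so `k • g` meets it. -/

open Function

section IsAdicGenerator

variable {A : Type*} [AddCommGroup A] [TopologicalSpace A]

def IsAdicGenerator (q : ℕ) (g : A) : Prop :=
  ∀ U : Set A, IsOpen U → U.Nonempty → ∃ c m : ℕ, ∀ k : ℕ, k ≡ c [MOD q ^ m] → k • g ∈ U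

theorem IsAdicGenerator.map {B : Type*} [AddCommGroup B] [TopologicalSpace B] {q : ℕ} {g : B}
    (hg : IsAdicGenerator q g) (f : B →+ A) (hf : Continuous f) (hsurj : Surjective f) :
    IsAdicGenerator q (f g) := by
  intro U hU hne
  obtain ⟨c, m, hcm⟩ := hg (f ⁻¹' U) (hU.preimage hf) (hne.preimage hsurj)
  exact ⟨c, m, fun k hk => by rw [← map_nsmul]; exact hcm k hk⟩

theorem isAdicGenerator_of_addOrderOf_dvd {q n : ℕ} {g : A}
    (hg : ∀ x : A, x ∈ AddSubmonoid.multiples g) (hord : addOrderOf g ∣ q ^ n) :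
    IsAdicGenerator q g := by
  rintro U - ⟨x, hx⟩
  obtain ⟨c, rfl⟩ := hg x
  refine ⟨c, n, fun k hk => ?_⟩
  rwa [nsmul_eq_nsmul_iff_modEq.2 (Nat.ModEq.of_dvd hord hk)]

theorem dense_zmultiples_pi_of_isAdicGenerator {ι : Type*} {X : ι → Type*}
    [∀ i, AddCommGroup (X i)] [∀ i, TopologicalSpace (X i)] (q : ι → ℕ) (hq : ∀ i, q i ≠ 0)
    (hcop : Pairwise (Nat.Coprime on q)) (g : ∀ i, X i) (hg : ∀ i, IsAdicGenerator (q i) (g i)) :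
    Dense (AddSubgroup.zmultiples g : Set (∀ i, X i)) := by
  classical
  rw [(isTopologicalBasis_pi fun i => TopologicalSpace.isTopologicalBasis_opens).dense_iff]
  rintro - ⟨U, F, hU, rfl⟩ ⟨x, hx⟩
  have hres : ∀ i, ∃ c m : ℕ, i ∈ F → ∀ k : ℕ, k ≡ c [MOD q i ^ m] → k • g i ∈ U i := by
    intro i
    by_cases hi : i ∈ F
    · obtain ⟨c, m, hcm⟩ := hg i (U i) (hU i hi) ⟨x i, hx i hi⟩
      exact ⟨c, m, fun _ => hcm⟩
    · exact ⟨0, 0, fun h => absurd h hi⟩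
  choose c m hcm using hres
  obtain ⟨k, hk⟩ := Nat.chineseRemainderOfFinset c (fun i => q i ^ m i) F
    (fun i _ => pow_ne_zero _ (hq i)) fun i _ j _ hij => (hcop hij).pow _ _
  exact ⟨k • g, fun i hi => hcm i hi k (hk i hi), (k : ℤ), natCast_zsmul _ _⟩

end IsAdicGenerator

theorem PadicInt.isAdicGenerator_one {p : ℕ} [Fact p.Prime] : IsAdicGenerator p (1 : ℤ_[p]) := by
  rintro U hU ⟨x, hx⟩
  obtain ⟨ε, hε, hball⟩ := Metric.isOpen_iff.1 hU x hx
  obtain ⟨m, hm⟩ := PadicInt.exists_pow_neg_lt p hε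
  refine ⟨x.appr m, m, fun k hk => hball ?_⟩
  have hdvd : (p : ℤ_[p]) ^ m ∣ (k : ℤ_[p]) - x.appr m := by
    simpa using map_dvd (Int.castRingHom ℤ_[p]) (Nat.ModEq.dvd hk.symm)
  have hmem : (k : ℤ_[p]) - x ∈ Ideal.span {(p : ℤ_[p]) ^ m} := by
    rw [← sub_sub_sub_cancel_right _ x (x.appr m : ℤ_[p])]
    exact sub_mem (Ideal.mem_span_singleton.2 hdvd) (x.appr_spec m)
  rw [nsmul_one, Metric.mem_ball, dist_eq_norm]
  exact ((PadicInt.norm_le_pow_iff_mem_span_pow _ m).2 hmem).trans_lt hm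

theorem AddEquiv.isAdicGenerator_symm_one {A : Type*} [AddCommGroup A] [TopologicalSpace A]
    {q n : ℕ} [NeZero (q ^ n)] (e : A ≃+ ZMod (q ^ n)) : IsAdicGenerator q (e.symm 1) := by
  refine isAdicGenerator_of_addOrderOf_dvd (n := n) (fun x => ⟨(e x).val, ?_⟩) ?_
  · show _ • _ = x
    rw [← map_nsmul, nsmul_one, ZMod.natCast_zmod_val, e.symm_apply_apply]
  · rw [e.symm.addOrderOf_eq, ZMod.addOrderOf_one]

theorem stmt3_general (S : Set Nat.Primes) (n : Nat.Primes → ℕ)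
    (A : Nat.Primes → Type*) [∀ p, AddCommGroup (A p)] [∀ p, TopologicalSpace (A p)]
    (hS : ∀ p ∈ S, ∃ e : A p ≃+ ℤ_[(p : ℕ)], Continuous e ∧ Continuous e.symm)
    (hS' : ∀ p ∉ S, DiscreteTopology (A p) ∧ Nonempty (A p ≃+ ZMod ((p : ℕ) ^ n p))) :
    ∃ g : (∀ p, A p), Dense ((AddSubgroup.zmultiples g : AddSubgroup (∀ p, A p)) : Set (∀ p, A p)) := by
  have hgen : ∀ p : Nat.Primes, ∃ g : A p, IsAdicGenerator (p : ℕ) g := by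
    intro p
    by_cases hp : p ∈ S
    · obtain ⟨e, -, he⟩ := hS p hp
      exact ⟨_, PadicInt.isAdicGenerator_one.map e.symm.toAddMonoidHom he e.symm.surjective⟩
    · obtain ⟨-, ⟨e⟩⟩ := hS' p hp
      have : NeZero ((p : ℕ) ^ n p) := ⟨pow_ne_zero _ p.2.ne_zero⟩
      exact ⟨_, e.isAdicGenerator_symm_one⟩
  choose g hg using hgen
  refine ⟨g, dense_zmultiples_pi_of_isAdicGenerator _ (fun p => p.2.ne_zero) ?_ g hg⟩
  exact fun p q hpq => (Nat.coprime_primes p.2 q.2).2 (Nat.Primes.coe_nat_injective.ne hpq)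

/-- Let `S` be a set of primes and `n p` a natural number for each prime `p`. The product
over all primes `p` of the groups `G p`, where `G p` is (topologically isomorphic to) the
additive group `ℤ_p` of `p`-adic integers if `p ∈ S` and the finite discrete cyclic group
`ℤ/p^{n p}ℤ` if `p ∉ S`, is monothetic: some element generates a dense cyclic subgroup. -/
theorem stmt3 (S : Set Nat.Primes) (n : Nat.Primes → ℕ)
    (A : Nat.Primes → Type*) [∀ p, AddCommGroup (A p)] [∀ p, TopologicalSpace (A p)]
    [∀ p, IsTopologicalAddGroup (A p)]
    (hS : ∀ p ∈ S, ∃ e : A p ≃+ ℤ_[(p : ℕ)], Continuous e ∧ Continuous e.symm)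
    (hS' : ∀ p ∉ S, DiscreteTopology (A p) ∧ Nonempty (A p ≃+ ZMod ((p : ℕ) ^ n p))) :
    ∃ g : (∀ p, A p), Dense ((AddSubgroup.zmultiples g : AddSubgroup (∀ p, A p)) : Set (∀ p, A p)) :=
  stmt3_general S n A hS hS'
end

section
/- Let G be a locally compact Hausdorff topological group with a compact open normal subgroup A such that the (discrete) quotient group G/A is isomorphic to an infinite subgroup of the additive group ℚ of rational numbers. Then G contains a discrete closed subgroup H with A ∩ H = {1} and A·H = G; in particular the quotient map G → G/A restricts to an isomorphism of H onto G/A and G is a semidirect product of A and H. -/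
/-!
`G ⧸ A ≅ S ≤ ℚ` is the union of an ascending chain of infinite cyclic groups
`⟨s₀⟩ ≤ ⟨s₁⟩ ≤ ⋯` with `sₙ = sₙ₊₁ ^ mₙ`. The cosets of the compact subgroup `A` are compact, so
a nested-intersection argument in `∏ n, sₙA` lifts the `sₙ` to `fₙ ∈ G` obeying the same relations
`fₙ = fₙ₊₁ ^ mₙ`. Then `H = ⋃ n, ⟨fₙ⟩` maps bijectively onto `G ⧸ A`, i.e. is a complement of `A`;
it is discrete because `A` is open and `H ∩ A = 1`, hence closed.
-/

open Function Subgroup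

namespace Rat

theorem zmultiples_div_le_zmultiples_div (x : ℚ) {a b : ℕ} (hab : a ∣ b) (hb : b ≠ 0) :
    AddSubgroup.zmultiples (x / a) ≤ AddSubgroup.zmultiples (x / b) := by
  obtain ⟨c, rfl⟩ := hab
  have ha : (a : ℚ) ≠ 0 := by exact_mod_cast left_ne_zero_of_mul hb
  have hc : (c : ℚ) ≠ 0 := by exact_mod_cast right_ne_zero_of_mul hb
  rw [AddSubgroup.zmultiples_le]
  refine AddSubgroup.mem_zmultiples_iff.mpr ⟨c, ?_⟩
  rw [zsmul_eq_mul]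
  push_cast
  field_simp

theorem mem_zmultiples_div_den (x y : ℚ) (hx : x ≠ 0) :
    y ∈ AddSubgroup.zmultiples (x / (y / x).den) := by
  refine AddSubgroup.mem_zmultiples_iff.mpr ⟨(y / x).num, ?_⟩
  rw [zsmul_eq_mul, mul_div_assoc', mul_comm, mul_div_assoc, Rat.num_div_den, mul_div_cancel₀ _ hx]

end Rat

/-- The chain is `S ∩ ℤ (x / n!)`; each term is cyclic as a subgroup of `ℤ (x / n!)`. -/
theorem AddSubgroup.exists_zmultiples_chain_of_rat (S : AddSubgroup ℚ) {x : ℚ} (hxS : x ∈ S)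
    (hx : x ≠ 0) :
    ∃ q : ℕ → ℚ, (∀ n, q n ∈ S) ∧ (∀ n, q n ≠ 0) ∧ (∀ n, q n ∈ zmultiples (q (n + 1))) ∧
      ∀ y ∈ S, ∃ n, y ∈ zmultiples (q n) := by
  have hcyc : ∀ n : ℕ, ∃ c, zmultiples c = S ⊓ zmultiples (x / n.factorial) := fun n =>
    (AddSubgroup.isAddCyclic_iff_exists_zmultiples_eq_top _).mp (isAddCyclic_of_le inf_le_right)
  choose q hq using hcyc
  have hmono : Monotone fun n : ℕ => zmultiples (x / n.factorial) := fun a b hab =>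
    Rat.zmultiples_div_le_zmultiples_div x (Nat.factorial_dvd_factorial hab)
      (Nat.factorial_ne_zero b)
  have hx_mem : ∀ n, x ∈ zmultiples (q n) := fun n => by
    rw [hq]
    exact ⟨hxS, hmono (Nat.zero_le n) (by simp)⟩
  refine ⟨q, fun n => ?_, fun n hqn => ?_, fun n => ?_, fun y hy => ⟨(y / x).den, ?_⟩⟩
  · have := mem_zmultiples (q n)
    rw [hq] at this
    exact this.1
  · have := hx_mem n
    rw [hqn, zmultiples_zero_eq_bot, mem_bot] at this
    exact hx this
  · rw [← zmultiples_le, hq, hq]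
    exact inf_le_inf_left S (hmono n.le_succ)
  · rw [hq]
    exact ⟨hy, Rat.zmultiples_div_le_zmultiples_div x (Nat.dvd_factorial (Rat.den_pos _) le_rfl)
      (Nat.factorial_ne_zero _) (Rat.mem_zmultiples_div_den x y hx)⟩

theorem exists_zpowers_chain_of_mulEquiv_rat {Q : Type*} [Group Q] (S : AddSubgroup ℚ) {x : ℚ}
    (hxS : x ∈ S) (hx : x ≠ 0) (e : Q ≃* Multiplicative S) :
    ∃ s : ℕ → Q, (∀ n, s n ∈ zpowers (s (n + 1))) ∧ (∀ n, ¬IsOfFinOrder (s n)) ∧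
      ∀ y, ∃ n, y ∈ zpowers (s n) := by
  obtain ⟨q, hqS, hq0, hchain, hcover⟩ := S.exists_zmultiples_chain_of_rat hxS hx
  let ι : S → Q := fun y => e.symm (Multiplicative.ofAdd y)
  have hι : ∀ (k : ℤ) (y : S), ι (k • y) = ι y ^ k := fun k y => by
    simp only [ι, ofAdd_zsmul, map_zpow]
  have hmem : ∀ {y z : S}, (y : ℚ) ∈ AddSubgroup.zmultiples (z : ℚ) → ι y ∈ zpowers (ι z) := by
    intro y z hyz
    obtain ⟨k, hk⟩ := AddSubgroup.mem_zmultiples_iff.mp hyz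
    exact mem_zpowers_iff.mpr ⟨k, by rw [← hι]; congr 1; exact Subtype.ext (by simpa using hk)⟩
  refine ⟨fun n => ι ⟨q n, hqS n⟩, fun n => hmem (hchain n), fun n hfin => ?_, fun y => ?_⟩
  · obtain ⟨k, hk, hk1⟩ := isOfFinOrder_iff_zpow_eq_one.mp hfin
    rw [← hι, ← map_one e.symm] at hk1
    have := congrArg Subtype.val (Multiplicative.ofAdd.injective (e.symm.injective hk1))
    simp only [AddSubgroup.coe_zsmul, ZeroMemClass.coe_zero, smul_eq_zero] at this
    exact this.elim hk (hq0 n)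
  · obtain ⟨n, hn⟩ := hcover _ (Multiplicative.toAdd (e y)).2
    exact ⟨n, by simpa [ι] using hmem (z := ⟨q n, hqS n⟩) hn⟩

theorem zpow_prod_Ico_of_zpow_succ {M : Type*} [Group M] {s : ℕ → M} {m : ℕ → ℤ}
    (hs : ∀ n, s (n + 1) ^ m n = s n) {j N : ℕ} (hjN : j ≤ N) :
    s N ^ ∏ k ∈ Finset.Ico j N, m k = s j := by
  induction N, hjN using Nat.le_induction with
  | base => simp
  | succ N hjN ih => rw [Finset.prod_Ico_succ_top hjN, mul_comm, zpow_mul, hs, ih]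

namespace MonoidHom

variable {G Q : Type*} [Group G] [TopologicalSpace G] [IsTopologicalGroup G] [Group Q]

theorem isCompact_preimage_singleton (π : G →* Q) (hker : IsCompact (π.ker : Set G)) (g : G) :
    IsCompact (π ⁻¹' {π g}) := by
  convert (Homeomorph.mulLeft g⁻¹).isCompact_preimage.mpr hker using 1
  ext x
  simp only [Set.mem_preimage, Set.mem_singleton_iff, Homeomorph.coe_mulLeft, SetLike.mem_coe,
    mem_ker, map_mul, map_inv, inv_mul_eq_one]
  exact eq_comm

/-- `f` is found in the intersection of the nested nonempty compact sets of `f ∈ ∏ n, π⁻¹{s n}`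
satisfying the first `N` relations. -/
theorem exists_zpow_compatible_lifts [T2Space G] (π : G →* Q) (hπ : Surjective π)
    (hker : IsCompact (π.ker : Set G)) {s : ℕ → Q} {m : ℕ → ℤ}
    (hs : ∀ n, s (n + 1) ^ m n = s n) :
    ∃ f : ℕ → G, (∀ n, π (f n) = s n) ∧ ∀ n, f (n + 1) ^ m n = f n := by
  have hfiber : ∀ q, IsCompact (π ⁻¹' {q}) := fun q => by
    obtain ⟨g, rfl⟩ := hπ q
    exact π.isCompact_preimage_singleton hker g
  let t : ℕ → Set (ℕ → G) := fun N =>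
    Set.univ.pi (fun n => π ⁻¹' {s n}) ∩ {f | ∀ n < N, f (n + 1) ^ m n = f n}
  have ht_closed : ∀ N, IsClosed (t N) := fun N => by
    refine (isClosed_set_pi fun n _ => (hfiber (s n)).isClosed).inter ?_
    simp only [Set.ofPred_forall]
    exact isClosed_iInter fun n => isClosed_iInter fun _ => isClosed_eq (by fun_prop) (by fun_prop)
  have ht_nonempty : ∀ N, (t N).Nonempty := fun N => by
    choose g hg using hπ
    refine ⟨fun j => g (s (max j N)) ^ ∏ k ∈ Finset.Ico j N, m k, fun j _ => ?_, fun n hn => ?_⟩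
    · rcases le_total j N with hjN | hNj
      · simp [max_eq_right hjN, hg, zpow_prod_Ico_of_zpow_succ hs hjN]
      · simp [max_eq_left hNj, hg, Finset.Ico_eq_empty_of_le hNj]
    · simp only [max_eq_right hn.le, max_eq_right (Nat.succ_le_of_lt hn), ← zpow_mul,
        Finset.prod_eq_prod_Ico_succ_bot hn, mul_comm]
  obtain ⟨f, hf⟩ := IsCompact.nonempty_iInter_of_sequence_nonempty_isCompact_isClosed t
    (fun N => Set.inter_subset_inter_right _ fun f hf n hn => hf n (Nat.lt_succ_of_lt hn))
    ht_nonempty ((isCompact_univ_pi fun n => hfiber (s n)).of_isClosed_subset (ht_closed 0)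
      Set.inter_subset_left) ht_closed
  rw [Set.mem_iInter] at hf
  exact ⟨f, fun n => (hf 0).1 n trivial, fun n => (hf (n + 1)).2 n n.lt_succ_self⟩

end MonoidHom

theorem Subgroup.isComplement'_iSup_zpowers {G : Type*} [Group G] (A : Subgroup G) [A.Normal]
    {f : ℕ → G} (hmono : Monotone fun n => zpowers (f n))
    (hinf : ∀ n, ¬IsOfFinOrder (f n : G ⧸ A))
    (hcover : ∀ x : G ⧸ A, ∃ n, x ∈ zpowers (f n : G ⧸ A)) :
    IsComplement' (⨆ n, zpowers (f n)) A := by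
  set H := ⨆ n, zpowers (f n)
  have hmem : ∀ {x}, x ∈ H ↔ ∃ n, x ∈ zpowers (f n) := mem_iSup_of_directed hmono.directed_le
  refine isComplement_subgroup_right_iff_bijective.mpr
    ⟨(injective_iff_map_eq_one ((QuotientGroup.mk' A).comp H.subtype)).mpr ?_, fun x => ?_⟩
  · rintro ⟨x, hx⟩ hx1
    obtain ⟨n, k, rfl⟩ : ∃ n, ∃ k : ℤ, f n ^ k = x := by simpa [mem_zpowers_iff] using hmem.mp hx
    obtain rfl : k = 0 := by
      by_contra hk
      exact hinf n (isOfFinOrder_iff_zpow_eq_one.mpr ⟨k, hk, by simpa using hx1⟩)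
    simp
  · obtain ⟨n, k, rfl⟩ : ∃ n, ∃ k : ℤ, (f n : G ⧸ A) ^ k = x := by
      simpa [mem_zpowers_iff] using hcover x
    exact ⟨⟨f n ^ k, hmem.mpr ⟨n, zpow_mem (mem_zpowers _) k⟩⟩, by simp⟩

theorem Subgroup.exists_isComplement'_of_zpowers_chain {G : Type*} [Group G]
    [TopologicalSpace G] [IsTopologicalGroup G] [T2Space G] (A : Subgroup G) [A.Normal]
    (hA : IsCompact (A : Set G)) {s : ℕ → G ⧸ A} (hchain : ∀ n, s n ∈ zpowers (s (n + 1)))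
    (hinf : ∀ n, ¬IsOfFinOrder (s n)) (hcover : ∀ x, ∃ n, x ∈ zpowers (s n)) :
    ∃ H : Subgroup G, IsComplement' H A := by
  choose m hm using fun n => mem_zpowers_iff.mp (hchain n)
  obtain ⟨f, hfs, hfm⟩ := (QuotientGroup.mk' A).exists_zpow_compatible_lifts
    (QuotientGroup.mk'_surjective A) (by rwa [QuotientGroup.ker_mk']) hm
  have hfs' : ∀ n, (f n : G ⧸ A) = s n := hfs
  refine ⟨_, A.isComplement'_iSup_zpowers (f := f) (monotone_nat_of_le_succ fun n =>
    zpowers_le.mpr (mem_zpowers_iff.mpr ⟨m n, hfm n⟩)) (by simpa [hfs'] using hinf)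
    (by simpa [hfs'] using hcover)⟩

theorem Subgroup.discreteTopology_of_disjoint {G : Type*} [Group G] [TopologicalSpace G]
    [IsTopologicalGroup G] {A H : Subgroup G} (hA : IsOpen (A : Set G)) (hdisj : Disjoint H A) :
    DiscreteTopology H := by
  refine discreteTopology_of_isOpen_singleton_one ?_
  convert hA.preimage continuous_subtype_val
  ext ⟨x, hx⟩
  simp only [Set.mem_singleton_iff, Set.mem_preimage, SetLike.mem_coe, Subtype.ext_iff,
    OneMemClass.coe_one]
  exact ⟨fun h => h ▸ A.one_mem, fun hxA => disjoint_def.mp hdisj hx hxA⟩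

theorem stmt6_general {G : Type*} [Group G] [TopologicalSpace G] [IsTopologicalGroup G]
    [T2Space G]
    (A : Subgroup G) [A.Normal] (hA_compact : IsCompact (A : Set G))
    (hA_open : IsOpen (A : Set G))
    (hQ : ∃ S : AddSubgroup ℚ, (S : Set ℚ).Infinite ∧
      Nonempty (G ⧸ A ≃* Multiplicative S)) :
    ∃ H : Subgroup G, IsClosed (H : Set G) ∧ DiscreteTopology H ∧
      A ⊓ H = ⊥ ∧ (∀ g : G, ∃ a ∈ A, ∃ h ∈ H, g = a * h) ∧
      Function.Bijective (fun h : H => (QuotientGroup.mk (h : G) : G ⧸ A)) := by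
  obtain ⟨S, hS, ⟨φ⟩⟩ := hQ
  obtain ⟨x, hxS, hx⟩ := hS.nontrivial.exists_ne 0
  obtain ⟨s, hchain, hinf, hcover⟩ := exists_zpowers_chain_of_mulEquiv_rat S hxS hx φ
  obtain ⟨H, hH⟩ := A.exists_isComplement'_of_zpowers_chain hA_compact hchain hinf hcover
  have hH_discrete := discreteTopology_of_disjoint hA_open hH.disjoint
  refine ⟨H, H.isClosed_of_discrete, hH_discrete, disjoint_iff.mp hH.disjoint.symm, fun g => ?_,
    isComplement_subgroup_right_iff_bijective.mp hH⟩
  obtain ⟨⟨a, h⟩, hah⟩ := hH.symm.2 g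
  exact ⟨a, a.2, h, h.2, hah.symm⟩

/-- Let `G` be a locally compact Hausdorff topological group with a compact open normal
subgroup `A` such that the quotient `G/A` is isomorphic to an infinite subgroup of `ℚ`.
Then `G` contains a discrete closed subgroup `H` with `A ∩ H = {1}` and `A·H = G`; in
particular the quotient map restricts to an isomorphism of `H` onto `G/A`, so `G` is a
semidirect product of `A` and `H`. -/
theorem stmt6 {G : Type*} [Group G] [TopologicalSpace G] [IsTopologicalGroup G]
    [LocallyCompactSpace G] [T2Space G]
    (A : Subgroup G) [A.Normal] (hA_compact : IsCompact (A : Set G))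
    (hA_open : IsOpen (A : Set G))
    (hQ : ∃ S : AddSubgroup ℚ, (S : Set ℚ).Infinite ∧
      Nonempty (G ⧸ A ≃* Multiplicative S)) :
    ∃ H : Subgroup G, IsClosed (H : Set G) ∧ DiscreteTopology H ∧
      A ⊓ H = ⊥ ∧ (∀ g : G, ∃ a ∈ A, ∃ h ∈ H, g = a * h) ∧
      Function.Bijective (fun h : H => (QuotientGroup.mk (h : G) : G ⧸ A)) :=
  stmt6_general A hA_compact hA_open hQ
end

section
/- Let G be a locally compact Hausdorff group, A a closed normal subgroup of G, and H a closed subgroup of G which is σ-compact and contains a subgroup that is compact and open in H, and assume A·H = G. Then the multiplication map μ : A × H → G, μ(a, h) = a·h (where A × H carries the product topology), is a continuous open surjection, and μ(a, h) = 1 if and only if h ∈ A ∩ H and a = h⁻¹. -/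
/-!
Since `A * H = G`, the map `H → G ⧸ A` is a continuous surjective homomorphism from a σ-compact
group onto a locally compact Hausdorff group, hence open by the open mapping theorem. Openness of
multiplication follows: a point `g` close to `a * h` lies in a coset `v A` with `v ∈ H` close to
`h`, and then `g = (g * v⁻¹) * v` with `g * v⁻¹ ∈ A` close to `a`.
-/

open Topology Filter Set

section QuotientRestriction

variable {G : Type*} [Group G] (A H : Subgroup G) [A.Normal]

theorem mk'_comp_subtype_surjective (hAH : ∀ g : G, ∃ a ∈ A, ∃ h ∈ H, g = a * h) :
    Function.Surjective ((QuotientGroup.mk' A).comp H.subtype) := by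
  intro q
  obtain ⟨g, rfl⟩ := QuotientGroup.mk'_surjective A q
  obtain ⟨a, ha, h, hh, rfl⟩ := hAH g
  exact ⟨⟨h, hh⟩, QuotientGroup.eq_iff_div_mem.mpr (by simpa [div_eq_mul_inv] using A.inv_mem ha)⟩

variable [TopologicalSpace G] [IsTopologicalGroup G]

theorem isOpenMap_mk'_comp_subtype [LocallyCompactSpace G] [IsClosed (A : Set G)]
    [SigmaCompactSpace H] (hAH : ∀ g : G, ∃ a ∈ A, ∃ h ∈ H, g = a * h) :
    IsOpenMap ((QuotientGroup.mk' A).comp H.subtype) :=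
  MonoidHom.isOpenMap_of_sigmaCompact _ (mk'_comp_subtype_surjective A H hAH)
    (continuous_quot_mk.comp continuous_subtype_val)

theorem isOpenMap_mul_of_isOpenMap_mk'_comp_subtype
    (hopen : IsOpenMap ((QuotientGroup.mk' A).comp H.subtype)) :
    IsOpenMap fun x : A × H => (x.1 : G) * x.2 := by
  refine IsOpenMap.of_nhds_le fun ⟨a, h⟩ s hs => ?_
  rw [mem_map, nhds_prod_eq, mem_prod_iff] at hs
  obtain ⟨t, ht, u, hu, htu⟩ := hs
  obtain ⟨T, hT, hTt⟩ := (mem_nhds_subtype (A : Set G) a t).mp ht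
  obtain ⟨W, hW, hWu⟩ := (mem_nhds_subtype (H : Set G) h u).mp hu
  have hdiv : Tendsto (fun p : G × G => p.1 * p.2⁻¹) (𝓝 ((a : G) * h, (h : G))) (𝓝 (a : G)) :=
    (continuous_fst.mul continuous_snd.inv).tendsto' _ _ (by simp)
  obtain ⟨S, hS, P, hP, hSP⟩ := mem_nhds_prod_iff.mp (hdiv hT)
  have hPW : ((↑) ⁻¹' (P ∩ W) : Set H) ∈ 𝓝 h :=
    continuous_subtype_val.continuousAt.preimage_mem_nhds (inter_mem hP hW)
  obtain ⟨V, hVsub, hVopen, hhV⟩ := mem_nhds_iff.mp hPW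
  have hcoset : (QuotientGroup.mk ⁻¹' ((QuotientGroup.mk' A).comp H.subtype '' V) : Set G) ∈
      𝓝 ((a : G) * h) := by
    refine continuous_quot_mk.continuousAt.preimage_mem_nhds
      ((hopen V hVopen).mem_nhds ⟨h, hhV, ?_⟩)
    exact QuotientGroup.eq_iff_div_mem.mpr (by simp [div_eq_mul_inv])
  filter_upwards [inter_mem hS hcoset] with g ⟨hgS, v, hvV, hvg⟩
  have hgvA : g * (v : G)⁻¹ ∈ A := by
    rw [← div_eq_mul_inv, ← QuotientGroup.eq_iff_div_mem]
    exact hvg.symm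
  have hmem : ((⟨g * (v : G)⁻¹, hgvA⟩ : A), v) ∈ t ×ˢ u :=
    ⟨hTt (show g * (v : G)⁻¹ ∈ T from hSP (mk_mem_prod hgS (hVsub hvV).1)), hWu (hVsub hvV).2⟩
  simpa using htu hmem

end QuotientRestriction

theorem stmt8_general {G : Type*} [Group G] [TopologicalSpace G] [IsTopologicalGroup G]
    [LocallyCompactSpace G]
    (A H : Subgroup G) [A.Normal]
    (hA_closed : IsClosed (A : Set G))
    (hH_sigma : SigmaCompactSpace H)
    (hAH : ∀ g : G, ∃ a ∈ A, ∃ h ∈ H, g = a * h) :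
    Continuous (fun x : A × H => (x.1 : G) * (x.2 : G)) ∧
    IsOpenMap (fun x : A × H => (x.1 : G) * (x.2 : G)) ∧
    Function.Surjective (fun x : A × H => (x.1 : G) * (x.2 : G)) ∧
    ∀ (a : A) (h : H), (a : G) * (h : G) = 1 ↔
      ((h : G) ∈ A ⊓ H ∧ (a : G) = (h : G)⁻¹) := by
  refine ⟨by fun_prop, ?_, ?_, fun a h => ?_⟩
  · exact isOpenMap_mul_of_isOpenMap_mk'_comp_subtype A H (isOpenMap_mk'_comp_subtype A H hAH)
  · intro g
    obtain ⟨a, ha, h, hh, rfl⟩ := hAH g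
    exact ⟨(⟨a, ha⟩, ⟨h, hh⟩), rfl⟩
  · rw [mul_eq_one_iff_eq_inv]
    refine ⟨fun ha => ⟨⟨?_, h.2⟩, ha⟩, And.right⟩
    rw [← inv_inv (h : G), ← ha]
    exact A.inv_mem a.2

/-- Let `G` be a locally compact Hausdorff group, `A` a closed normal subgroup, and `H` a
closed σ-compact subgroup containing a subgroup which is compact and open in `H`, with
`A·H = G`. Then the multiplication map `μ : A × H → G` is a continuous open surjection and
`μ(a, h) = 1` iff `h ∈ A ∩ H` and `a = h⁻¹`. -/
theorem stmt8 {G : Type*} [Group G] [TopologicalSpace G] [IsTopologicalGroup G]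
    [LocallyCompactSpace G] [T2Space G]
    (A H : Subgroup G) [A.Normal]
    (hA_closed : IsClosed (A : Set G)) (hH_closed : IsClosed (H : Set G))
    (hH_sigma : SigmaCompactSpace H)
    (hH_cpt_open : ∃ K : Subgroup G, K ≤ H ∧ IsCompact (K : Set G) ∧
      IsOpen {x : H | (x : G) ∈ K})
    (hAH : ∀ g : G, ∃ a ∈ A, ∃ h ∈ H, g = a * h) :
    Continuous (fun x : A × H => (x.1 : G) * (x.2 : G)) ∧
    IsOpenMap (fun x : A × H => (x.1 : G) * (x.2 : G)) ∧
    Function.Surjective (fun x : A × H => (x.1 : G) * (x.2 : G)) ∧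
    ∀ (a : A) (h : H), (a : G) * (h : G) = 1 ↔
      ((h : G) ∈ A ⊓ H ∧ (a : G) = (h : G)⁻¹) :=
  stmt8_general A H hA_closed hH_sigma hAH
end

section
/- Let G be a periodic topological group which is topologically quasihamiltonian. Then for every prime p the set G_p of all p-elements of G is a closed normal subgroup of G, and for distinct primes p ≠ q every element of G_p commutes with every element of G_q. -/
/-- For a set `σ` of primes, an element `g` of a topological group `G` is a *σ-element* if
the closure `K` of the cyclic subgroup generated by `g` is compact and every open subgroup
of `K` has finite index all of whose prime divisors belong to `σ`. -/
def IsSigmaElement {G : Type*} [Group G] [TopologicalSpace G] [IsTopologicalGroup G]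
    (σ : Set ℕ) (g : G) : Prop :=
  IsCompact (closure ((Subgroup.zpowers g : Subgroup G) : Set G)) ∧
  ∀ U : Subgroup ((Subgroup.zpowers g).topologicalClosure),
    IsOpen (U : Set ((Subgroup.zpowers g).topologicalClosure)) →
      U.index ≠ 0 ∧ ∀ r : ℕ, r.Prime → r ∣ U.index → r ∈ σ

/-- A topological group is *periodic* if it is locally compact Hausdorff, totally
disconnected, and every element generates a relatively compact cyclic subgroup. -/
def IsPeriodicGroup (G : Type*) [Group G] [TopologicalSpace G] : Prop :=
  LocallyCompactSpace G ∧ T2Space G ∧ TotallyDisconnectedSpace G ∧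
    ∀ g : G, IsCompact (closure ((Subgroup.zpowers g : Subgroup G) : Set G))

/-- A topological group is *Π-procyclic* if it is an abelian periodic group such that for
every prime `p` the set of its `p`-elements is the closure of a cyclic subgroup. -/
def IsPiProcyclic (G : Type*) [Group G] [TopologicalSpace G] [IsTopologicalGroup G] : Prop :=
  (∀ a b : G, a * b = b * a) ∧ IsPeriodicGroup G ∧
    ∀ p : ℕ, p.Prime → ∃ c : G,
      {g : G | IsSigmaElement {p} g} = closure ((Subgroup.zpowers c : Subgroup G) : Set G)

open Pointwise

/-- A topological group `G` is *topologically quasihamiltonian* if for all closed subgroups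
`X` and `Y` the closure of the set `XY` equals the closure of the set `YX`. -/
def TopologicallyQuasihamiltonian (G : Type*) [Group G] [TopologicalSpace G] : Prop :=
  ∀ X Y : Subgroup G, IsClosed (X : Set G) → IsClosed (Y : Set G) →
    closure ((X : Set G) * (Y : Set G)) = closure ((Y : Set G) * (X : Set G))

/-!
By van Dantzig's theorem a locally compact totally disconnected group has arbitrarily small compact
open subgroups. Since an open subgroup of the procyclic group `⟨g⟩‾` has index equal to the order of
`g` modulo it, `g` is a `p`-element iff every open subgroup contains some `g ^ p ^ t`.
In a quasihamiltonian group the product `X * Y` of two compact subgroups is a compact subgroup.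
If `x` and `y` are `p`-elements, every finite quotient of `⟨x⟩‾ * ⟨y⟩‾` is the product of two
`p`-subgroups, hence a `p`-group, so `x * y` is a `p`-element. For closedness, the compact open
subgroup `⟨x⟩‾ * U` has arbitrarily small open normal subgroups `N`, and a `p`-element in `x * N`
makes `x` a `p`-element modulo `N`. The components for distinct primes are normal subgroups meeting
trivially, so they commute.
-/

open Topology
open Subgroup (zpowers mem_zpowers)

namespace Subgroup

variable {G : Type*} [Group G]

theorem coe_sup_eq_mul_of_mul_comm {H K : Subgroup G} (h : (H : Set G) * (K : Set G) = K * H) :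
    ((H ⊔ K : Subgroup G) : Set G) = H * K := by
  let S : Subgroup G :=
    { carrier := H * K
      one_mem' := ⟨1, H.one_mem, 1, K.one_mem, one_mul 1⟩
      mul_mem' := by
        rintro _ _ ⟨a, ha, b, hb, rfl⟩ ⟨c, hc, d, hd, rfl⟩
        obtain ⟨c', hc', b', hb', hcb⟩ : b * c ∈ (H : Set G) * K := h ▸ Set.mul_mem_mul hb hc
        refine ⟨a * c', mul_mem ha hc', b' * d, mul_mem hb' hd, ?_⟩
        simp only [mul_assoc, ← mul_assoc c', hcb]
      inv_mem' := by
        rintro _ ⟨a, ha, b, hb, rfl⟩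
        rw [mul_inv_rev, h]
        exact Set.mul_mem_mul (inv_mem hb) (inv_mem ha) }
  have hS : H ⊔ K = S := le_antisymm
    (sup_le (fun a ha => ⟨a, ha, 1, K.one_mem, mul_one a⟩)
      (fun b hb => ⟨1, H.one_mem, b, hb, one_mul b⟩))
    (by rintro _ ⟨a, ha, b, hb, rfl⟩; exact mul_mem_sup ha hb)
  rw [hS]
  rfl

theorem card_dvd_card_mul_card_of_mul_eq_univ {A B : Subgroup G}
    (h : (A : Set G) * (B : Set G) = Set.univ) : Nat.card G ∣ Nat.card A * Nat.card B := by
  have horbit : ((↑) '' (A : Set G) : Set (G ⧸ B)) = MulAction.orbit A ((1 : G) : G ⧸ B) := by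
    ext y
    constructor
    · rintro ⟨a, ha, rfl⟩
      exact ⟨⟨a, ha⟩, congrArg _ (mul_one a)⟩
    · rintro ⟨⟨a, ha⟩, rfl⟩
      exact ⟨a, ha, congrArg _ (mul_one a).symm⟩
  have hdvd : Nat.card (MulAction.orbit A ((1 : G) : G ⧸ B)) ∣ Nat.card A :=
    Nat.card_congr (MulAction.orbitEquivQuotientStabilizer A ((1 : G) : G ⧸ B)) ▸ index_dvd_card _
  rw [← Nat.card_univ, ← h, card_mul_eq_card_subgroup_mul_card_quotient, horbit, mul_comm]
  exact mul_dvd_mul_right hdvd _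

theorem mul_pow_mem_iff_pow_mem {N : Subgroup G} {x n : G} (hx : x ∈ normalizer (N : Set G))
    (hn : n ∈ N) (m : ℕ) : (x * n) ^ m ∈ N ↔ x ^ m ∈ N := by
  obtain ⟨n', hn', hpow⟩ : ∃ n' ∈ N, (x * n) ^ m = x ^ m * n' := by
    induction m with
    | zero => exact ⟨1, N.one_mem, by simp⟩
    | succ m ih =>
      obtain ⟨n', hn', hpow⟩ := ih
      refine ⟨x⁻¹ * n' * x * n, mul_mem ?_ hn, by rw [pow_succ, hpow, pow_succ]; group⟩
      simpa using (mem_normalizer_iff.mp (inv_mem hx) n').mp hn'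
  rw [hpow, mul_mem_cancel_right hn']

end Subgroup

section CompactSubgroups

variable {G : Type*} [Group G] [TopologicalSpace G] [IsTopologicalGroup G]

theorem exists_isOpen_isCompact_subgroup_subset [LocallyCompactSpace G] [T2Space G]
    [TotallyDisconnectedSpace G] {W : Set G} (hW : W ∈ 𝓝 1) :
    ∃ V : Subgroup G, IsOpen (V : Set G) ∧ IsCompact (V : Set G) ∧ (V : Set G) ⊆ W := by
  obtain ⟨s, hs, hsW, hsc⟩ := local_compact_nhds hW
  obtain ⟨C, hCclopen, hC1, hCs⟩ :=
    loc_compact_Haus_tot_disc_of_zero_dim.mem_nhds_iff.mp (interior_mem_nhds.mpr hs)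
  have hCc : IsCompact C := hsc.of_isClosed_subset hCclopen.1 (hCs.trans interior_subset)
  obtain ⟨T, hT, hTC⟩ := compact_open_separated_mul_left hCc hCclopen.2 subset_rfl
  -- The stabilizer of a compact open neighbourhood `C` of `1` is an open subgroup inside `C`.
  let V := MulAction.stabilizer G C
  have hVC : (V : Set G) ⊆ C := fun g hg => by
    rw [SetLike.mem_coe, MulAction.mem_stabilizer_iff] at hg
    have := Set.smul_mem_smul_set (a := g) hC1
    rwa [hg, smul_eq_mul, mul_one] at this
  have hTV : T ∩ T⁻¹ ⊆ V := by
    rintro t ⟨ht, ht'⟩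
    have hle : ∀ u ∈ T, u • C ⊆ C := fun u hu => (Set.smul_set_subset_mul hu).trans hTC
    refine MulAction.mem_stabilizer_iff.mpr (le_antisymm (hle t ht) ?_)
    simpa [Set.subset_smul_set_iff] using hle _ ht'
  have hVo : IsOpen (V : Set G) :=
    V.isOpen_of_mem_nhds (Filter.mem_of_superset (Filter.inter_mem hT (inv_mem_nhds_one G hT)) hTV)
  exact ⟨V, hVo, hCc.of_isClosed_subset (V.isClosed_of_isOpen hVo) hVC,
    hVC.trans (hCs.trans (interior_subset.trans hsW))⟩

theorem exists_openNormalSubgroup_subset_of_isCompact [TotallyDisconnectedSpace G]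
    {K : Subgroup G} (hK : IsCompact (K : Set G)) {V : Subgroup G} (hV : IsOpen (V : Set G)) :
    ∃ N : OpenNormalSubgroup K, ∀ k ∈ N, (k : G) ∈ V := by
  have := isCompact_iff_compactSpace.mp hK
  exact ProfiniteGrp.exist_openNormalSubgroup_sub_open_nhds_of_one
    (hV.preimage continuous_subtype_val) V.one_mem

theorem TopologicallyQuasihamiltonian.coe_sup_eq_mul [T2Space G]
    (hqh : TopologicallyQuasihamiltonian G) {X Y : Subgroup G} (hX : IsCompact (X : Set G))
    (hY : IsCompact (Y : Set G)) : ((X ⊔ Y : Subgroup G) : Set G) = X * Y := by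
  refine Subgroup.coe_sup_eq_mul_of_mul_comm ?_
  have := hqh X Y hX.isClosed hY.isClosed
  rwa [(hX.mul hY).isClosed.closure_eq, (hY.mul hX).isClosed.closure_eq] at this

theorem TopologicallyQuasihamiltonian.isCompact_sup [T2Space G]
    (hqh : TopologicallyQuasihamiltonian G) {X Y : Subgroup G} (hX : IsCompact (X : Set G))
    (hY : IsCompact (Y : Set G)) : IsCompact ((X ⊔ Y : Subgroup G) : Set G) := by
  rw [hqh.coe_sup_eq_mul hX hY]
  exact hX.mul hY

end CompactSubgroups

section Procyclic

variable {G : Type*} [Group G] [TopologicalSpace G] [IsTopologicalGroup G]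

theorem mem_topologicalClosure_zpowers (g : G) : g ∈ (zpowers g).topologicalClosure :=
  (zpowers g).le_topologicalClosure (mem_zpowers g)

theorem zpowers_sup_eq_top_of_isOpen {g : G} {U : Subgroup (zpowers g).topologicalClosure}
    (hU : IsOpen (U : Set (zpowers g).topologicalClosure)) :
    zpowers ⟨g, mem_topologicalClosure_zpowers g⟩ ⊔ U = ⊤ := by
  have hSc := Subgroup.isClosed_of_isOpen _ (Subgroup.isOpen_mono
    (le_sup_right (a := zpowers ⟨g, mem_topologicalClosure_zpowers g⟩)) hU)
  have hS := (zpowers g).isClosed_topologicalClosure.isClosedMap_subtype_val _ hSc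
  rw [← Subgroup.coe_subtype, ← Subgroup.coe_map] at hS
  have hCS := (zpowers g).topologicalClosure_minimal (Subgroup.zpowers_le.mpr
    (Subgroup.mem_map_of_mem _ (le_sup_left (a := zpowers _) (mem_zpowers _)))) hS
  exact eq_top_iff.mpr fun c _ =>
    (Subgroup.mem_map_iff_mem (Subgroup.subtype_injective _)).mp (hCS c.2)

theorem normal_of_topologicalClosure_zpowers [T2Space G] {g : G}
    (U : Subgroup (zpowers g).topologicalClosure) : U.Normal := by
  let := (zpowers g).commGroupTopologicalClosure
    fun ⟨_, i, hi⟩ ⟨_, j, hj⟩ => Subtype.ext (hi ▸ hj ▸ zpow_mul_comm g i j)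
  exact ⟨fun a ha c => by rwa [mul_comm c a, mul_inv_cancel_right]⟩

theorem index_dvd_of_pow_mem_topologicalClosure_zpowers [T2Space G] {g : G}
    {U : Subgroup (zpowers g).topologicalClosure}
    (hU : IsOpen (U : Set (zpowers g).topologicalClosure)) {n : ℕ}
    (hn : ⟨g, mem_topologicalClosure_zpowers g⟩ ^ n ∈ U) : U.index ∣ n := by
  have := normal_of_topologicalClosure_zpowers U
  have hgen : zpowers (QuotientGroup.mk' U ⟨g, mem_topologicalClosure_zpowers g⟩) = ⊤ := by
    rw [← MonoidHom.map_zpowers, ← sup_bot_eq (Subgroup.map _ _), ← QuotientGroup.map_mk'_self U,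
      ← Subgroup.map_sup, zpowers_sup_eq_top_of_isOpen hU,
      Subgroup.map_top_of_surjective _ (QuotientGroup.mk'_surjective U)]
  rw [U.index_eq_card, ← Subgroup.card_top, ← hgen, Nat.card_zpowers, orderOf_dvd_iff_pow_eq_one,
    ← map_pow, QuotientGroup.mk'_apply, QuotientGroup.eq_one_iff]
  exact hn

end Procyclic

section SigmaElements

variable {G : Type*} [Group G] [TopologicalSpace G] [IsTopologicalGroup G] {p : ℕ} {g : G}

theorem isSigmaElement_inv_iff {σ : Set ℕ} : IsSigmaElement σ g⁻¹ ↔ IsSigmaElement σ g := by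
  unfold IsSigmaElement
  rw [Subgroup.zpowers_inv]

theorem IsSigmaElement.exists_index_eq_pow (hg : IsSigmaElement {p} g)
    {U : Subgroup (zpowers g).topologicalClosure}
    (hU : IsOpen (U : Set (zpowers g).topologicalClosure)) : ∃ k, U.index = p ^ k :=
  ⟨_, Nat.eq_prime_pow_of_unique_prime_dvd (hg.2 U hU).1 fun hr hrU => (hg.2 U hU).2 _ hr hrU⟩

theorem IsSigmaElement.exists_pow_mem [T2Space G] (hg : IsSigmaElement {p} g) {V : Subgroup G}
    (hV : IsOpen (V : Set G)) : ∃ t, g ^ p ^ t ∈ V := by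
  obtain ⟨k, hk⟩ := hg.exists_index_eq_pow (Subgroup.subgroupOf_isOpen _ _ hV)
  have := normal_of_topologicalClosure_zpowers (V.subgroupOf (zpowers g).topologicalClosure)
  exact ⟨k, hk ▸ Subgroup.pow_index_mem (V.subgroupOf (zpowers g).topologicalClosure)
    (⟨g, mem_topologicalClosure_zpowers g⟩ : (zpowers g).topologicalClosure)⟩

theorem isSigmaElement_of_forall_pow_mem [LocallyCompactSpace G] [T2Space G]
    [TotallyDisconnectedSpace G] (hp : p.Prime) (hc : IsCompact (closure (zpowers g : Set G)))
    (h : ∀ V : Subgroup G, IsOpen (V : Set G) → ∃ t, g ^ p ^ t ∈ V) : IsSigmaElement {p} g := by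
  refine ⟨hc, fun U hU => ?_⟩
  obtain ⟨W, hWo, hWU⟩ := isOpen_induced_iff.mp hU
  have hW1 : (1 : G) ∈ W :=
    (hWU ▸ U.one_mem : (1 : (zpowers g).topologicalClosure) ∈ Subtype.val ⁻¹' W)
  obtain ⟨V, hVo, -, hVW⟩ := exists_isOpen_isCompact_subgroup_subset (hWo.mem_nhds hW1)
  obtain ⟨t, ht⟩ := h V hVo
  have hdvd : U.index ∣ p ^ t := by
    refine index_dvd_of_pow_mem_topologicalClosure_zpowers hU ?_
    rw [← SetLike.mem_coe, ← hWU]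
    exact hVW ht
  exact ⟨ne_zero_of_dvd_ne_zero (pow_ne_zero t hp.ne_zero) hdvd,
    fun r hr hrU => (Nat.prime_dvd_prime_iff_eq hr hp).mp (hr.dvd_of_dvd_pow (hrU.trans hdvd))⟩

theorem IsSigmaElement.conj [LocallyCompactSpace G] [T2Space G] [TotallyDisconnectedSpace G]
    (hp : p.Prime) (hg : IsSigmaElement {p} g) (h : G)
    (hc : IsCompact (closure (zpowers (h * g * h⁻¹) : Set G))) :
    IsSigmaElement {p} (h * g * h⁻¹) := by
  refine isSigmaElement_of_forall_pow_mem hp hc fun V hV => ?_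
  obtain ⟨t, ht⟩ := hg.exists_pow_mem (V := V.comap (MulAut.conj h).toMonoidHom)
    (hV.preimage ((continuous_const.mul continuous_id).mul continuous_const))
  exact ⟨t, by simpa [conj_pow] using ht⟩

theorem IsSigmaElement.eq_one [LocallyCompactSpace G] [T2Space G] [TotallyDisconnectedSpace G]
    {q : ℕ} (hpq : p ≠ q) (hp : IsSigmaElement {p} g) (hq : IsSigmaElement {q} g) : g = 1 := by
  by_contra hg
  obtain ⟨V, hVo, -, hVg⟩ :=
    exists_isOpen_isCompact_subgroup_subset (isOpen_compl_singleton.mem_nhds (Ne.symm hg))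
  have hU := Subgroup.subgroupOf_isOpen (zpowers g).topologicalClosure V hVo
  have hindex : (V.subgroupOf (zpowers g).topologicalClosure).index = 1 :=
    Nat.eq_one_iff_not_exists_prime_dvd.mpr fun r hr hrU =>
      hpq (((hp.2 _ hU).2 r hr hrU).symm.trans ((hq.2 _ hU).2 r hr hrU))
  have hg : (⟨g, mem_topologicalClosure_zpowers g⟩ : (zpowers g).topologicalClosure) ∈
      V.subgroupOf (zpowers g).topologicalClosure :=
    Subgroup.index_eq_one.mp hindex ▸ Subgroup.mem_top _
  exact hVg hg rfl

end SigmaElements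

section Quasihamiltonian

variable {G : Type*} [Group G] [TopologicalSpace G] [IsTopologicalGroup G] {p : ℕ}

theorem IsSigmaElement.exists_card_range_eq_pow {g : G} (hg : IsSigmaElement {p} g)
    {K : Subgroup G} (hgK : (zpowers g).topologicalClosure ≤ K) (N : OpenNormalSubgroup K) :
    ∃ k, Nat.card ((QuotientGroup.mk' (N : Subgroup K)).comp (Subgroup.inclusion hgK)).range =
      p ^ k := by
  rw [← Subgroup.index_ker, ← MonoidHom.comap_ker, QuotientGroup.ker_mk']
  exact hg.exists_index_eq_pow (N.isOpen.preimage (continuous_inclusion hgK))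

variable [LocallyCompactSpace G] [T2Space G] [TotallyDisconnectedSpace G]

theorem IsSigmaElement.mul (hqh : TopologicallyQuasihamiltonian G) (hp : p.Prime) {x y : G}
    (hx : IsSigmaElement {p} x) (hy : IsSigmaElement {p} y)
    (hc : IsCompact (closure (zpowers (x * y) : Set G))) : IsSigmaElement {p} (x * y) := by
  set X := (zpowers x).topologicalClosure
  set Y := (zpowers y).topologicalClosure
  have hXc : IsCompact (X : Set G) := hx.1
  have hYc : IsCompact (Y : Set G) := hy.1
  have hXY : ((X ⊔ Y : Subgroup G) : Set G) = X * Y := hqh.coe_sup_eq_mul hXc hYc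
  refine isSigmaElement_of_forall_pow_mem hp hc fun V hV => ?_
  obtain ⟨N, hNV⟩ := exists_openNormalSubgroup_subset_of_isCompact (hqh.isCompact_sup hXc hYc) hV
  set π := QuotientGroup.mk' (N : Subgroup ↥(X ⊔ Y))
  obtain ⟨a, ha⟩ := hx.exists_card_range_eq_pow le_sup_left N
  obtain ⟨b, hb⟩ := hy.exists_card_range_eq_pow le_sup_right N
  have hcover : SetLike.coe (π.comp (Subgroup.inclusion le_sup_left)).range *
      SetLike.coe (π.comp (Subgroup.inclusion le_sup_right)).range = Set.univ := by
    refine Set.eq_univ_of_forall fun q => ?_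
    obtain ⟨k, rfl⟩ := QuotientGroup.mk'_surjective _ q
    obtain ⟨u, hu, v, hv, huv⟩ : (k : G) ∈ (X : Set G) * Y := hXY ▸ k.2
    refine ⟨_, ⟨⟨u, hu⟩, rfl⟩, _, ⟨⟨v, hv⟩, rfl⟩, ?_⟩
    exact (map_mul π _ _).symm.trans (congrArg π (Subtype.ext huv))
  obtain ⟨c, -, hcard⟩ := (Nat.dvd_prime_pow hp).mp
    (pow_add p a b ▸ ha ▸ hb ▸ Subgroup.card_dvd_card_mul_card_of_mul_eq_univ hcover)
  have hxy : x * y ∈ X ⊔ Y := mul_mem (Subgroup.mem_sup_left (mem_topologicalClosure_zpowers x))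
    (Subgroup.mem_sup_right (mem_topologicalClosure_zpowers y))
  refine ⟨c, hNV (⟨x * y, hxy⟩ ^ p ^ c) ?_⟩
  rw [← hcard, ← Subgroup.index_eq_card]
  exact Subgroup.pow_index_mem _ _

theorem isClosed_setOf_isSigmaElement (hqh : TopologicallyQuasihamiltonian G) (hp : p.Prime)
    (hper : ∀ g : G, IsCompact (closure (zpowers g : Set G))) :
    IsClosed {g : G | IsSigmaElement {p} g} := by
  refine isClosed_of_closure_subset fun x hx =>
    isSigmaElement_of_forall_pow_mem hp (hper x) fun V hV => ?_
  obtain ⟨U, hUo, hUc, -⟩ :=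
    exists_isOpen_isCompact_subgroup_subset (Filter.univ_mem (f := 𝓝 (1 : G)))
  set K := (zpowers x).topologicalClosure ⊔ U
  have hXc : IsCompact ((zpowers x).topologicalClosure : Set G) := hper x
  have hxK : x ∈ K := Subgroup.mem_sup_left (mem_topologicalClosure_zpowers x)
  obtain ⟨N, hNV⟩ := exists_openNormalSubgroup_subset_of_isCompact (hqh.isCompact_sup hXc hUc) hV
  have hNo : IsOpen (((N : Subgroup K).map K.subtype : Subgroup G) : Set G) := by
    rw [Subgroup.coe_map]
    exact (Subgroup.isOpen_mono le_sup_right hUo).isOpenMap_subtype_val _ N.isOpen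
  have hxN : x ∈ Subgroup.normalizer (((N : Subgroup K).map K.subtype : Subgroup G) : Set G) :=
    Subgroup.le_normalizer_map _ (Subgroup.mem_map_of_mem _
      (Subgroup.normalizer_eq_top (H := (N : Subgroup K)) ▸ Subgroup.mem_top (⟨x, hxK⟩ : K)))
  obtain ⟨_, ⟨n, hn, rfl⟩, hg⟩ :=
    mem_closure_iff.mp hx _ (hNo.smul x) ⟨1, Subgroup.one_mem _, mul_one x⟩
  obtain ⟨t, ht⟩ := (hg : IsSigmaElement {p} (x * n)).exists_pow_mem hNo
  obtain ⟨k, hk, hkx⟩ := (Subgroup.mul_pow_mem_iff_pow_mem hxN hn _).mp ht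
  exact ⟨t, hkx ▸ hNV k hk⟩

end Quasihamiltonian

section PrimaryComponent

variable {G : Type*} [Group G] [TopologicalSpace G] [IsTopologicalGroup G] [LocallyCompactSpace G]
  [T2Space G] [TotallyDisconnectedSpace G] (hqh : TopologicallyQuasihamiltonian G)
  (hper : ∀ g : G, IsCompact (closure (zpowers g : Set G))) {p : ℕ} (hp : p.Prime)

def primaryComponent : Subgroup G where
  carrier := {g | IsSigmaElement {p} g}
  one_mem' := isSigmaElement_of_forall_pow_mem hp (hper 1) fun V _ => ⟨0, by simp⟩
  mul_mem' hx hy := hx.mul hqh hp hy (hper _)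
  inv_mem' hg := isSigmaElement_inv_iff.mpr hg

theorem primaryComponent_normal : (primaryComponent hqh hper hp).Normal :=
  ⟨fun _ hg h => hg.conj hp h (hper _)⟩

end PrimaryComponent

/-- Let `G` be a periodic topologically quasihamiltonian group. Then for every prime `p`
the set `G_p` of `p`-elements is a closed normal subgroup, and for distinct primes `p ≠ q`
every `p`-element commutes with every `q`-element. -/
theorem stmt16 {G : Type*} [Group G] [TopologicalSpace G] [IsTopologicalGroup G]
    (hG : IsPeriodicGroup G) (hqh : TopologicallyQuasihamiltonian G) :
    (∀ p : ℕ, p.Prime → ∃ P : Subgroup G,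
        (P : Set G) = {g : G | IsSigmaElement {p} g} ∧
        IsClosed (P : Set G) ∧ P.Normal) ∧
    (∀ p q : ℕ, p.Prime → q.Prime → p ≠ q →
        ∀ x y : G, IsSigmaElement {p} x → IsSigmaElement {q} y → Commute x y) := by
  obtain ⟨_, _, _, hper⟩ := hG
  refine ⟨fun p hp => ⟨primaryComponent hqh hper hp, rfl,
    isClosed_setOf_isSigmaElement hqh hp hper, primaryComponent_normal hqh hper hp⟩,
    fun p q hp hq hpq x y hx hy => ?_⟩
  have hdisj : Disjoint (primaryComponent hqh hper hp) (primaryComponent hqh hper hq) :=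
    Subgroup.disjoint_def.mpr fun hp hq => hp.eq_one hpq hq
  exact Subgroup.commute_of_normal_of_disjoint _ _ (primaryComponent_normal hqh hper hp)
    (primaryComponent_normal hqh hper hq) hdisj x y hx hy
end

section
/- Let p and q be primes with p dividing q − 1, let ζ be an element of order p in the multiplicative group (ℤ/qℤ)ˣ, let V be a nontrivial vector space over the field ℤ/qℤ (equivalently, a nontrivial abelian group in which every element x satisfies q·x = 0), and let G = V ⋊ ℤ/pℤ be the semidirect product in which the generator of ℤ/pℤ acts on V by scalar multiplication by ζ. Then: (i) the lattice of subgroups of G is modular; (ii) G is not quasihamiltonian: there exist subgroups X and Y of G with X·Y ≠ Y·X as subsets of G. -/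
/-!
The map `c : V ⋊ ℤ/p → V × ℤ/q`, `(v, k) ↦ (v, 1 - ζ ^ k)`, is injective and a crossed
homomorphism, `c (g h) = c g + ζ ^ k(g) • c h`, so the preimage of every subspace of
`V × ℤ/q` is a subgroup. Conversely a subgroup inside `V` is the preimage of `W × 0`, and one
containing the `u`-conjugate `(u - ζ u, 1)` of the generator is the preimage of
`{(x, t) | x - t u ∈ W}`, where `W` is its intersection with `V`. Every line of `V × ℤ/q` meets
the image of `c`, so this is an order isomorphism between the subgroup lattice and the
(modular) subspace lattice of `V × ℤ/q`.

The two complements `X = c⁻¹ ⟨(w, 1)⟩` and `Y = c⁻¹ ⟨(0, 1)⟩` do not permute: `X ⊔ Y` contains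
`(w, 0)`, whereas every product `x y` has `V`-component `(1 - ζ ^ k) w ≠ w`.
-/

open Pointwise

theorem OrderIso.isModularLattice {α β : Type*} [Lattice α] [Lattice β] [IsModularLattice α]
    (e : α ≃o β) : IsModularLattice β where
  sup_inf_le_assoc_of_le {x} y {z} h := by
    rw [← e.symm.le_iff_le, map_inf, map_sup, map_sup, map_inf]
    exact sup_inf_le_assoc_of_le _ (e.symm.monotone h)

theorem Subgroup.coe_sup_of_mul_comm {G : Type*} [Group G] {H K : Subgroup G}
    (hHK : (H : Set G) * K = K * H) : ((H ⊔ K : Subgroup G) : Set G) = H * K := by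
  let L : Subgroup G :=
    { carrier := H * K
      one_mem' := ⟨1, H.one_mem, 1, K.one_mem, mul_one 1⟩
      mul_mem' := by
        rintro _ _ ⟨x, hx, y, hy, rfl⟩ ⟨x', hx', y', hy', rfl⟩
        obtain ⟨x'', hx'', y'', hy'', hyx⟩ : y * x' ∈ (H : Set G) * K :=
          hHK ▸ Set.mul_mem_mul hy hx'
        exact ⟨x * x'', H.mul_mem hx hx'', y'' * y', K.mul_mem hy'' hy', by
          simp only [mul_assoc, ← mul_assoc x'', hyx]⟩
      inv_mem' := by
        rintro _ ⟨x, hx, y, hy, rfl⟩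
        rw [mul_inv_rev, hHK]
        exact Set.mul_mem_mul (K.inv_mem hy) (H.inv_mem hx) }
  refine le_antisymm (?_ : H ⊔ K ≤ L) ?_
  · exact sup_le (fun x hx => ⟨x, hx, 1, K.one_mem, mul_one x⟩)
      (fun y hy => ⟨1, H.one_mem, y, hy, one_mul y⟩)
  · rintro _ ⟨x, hx, y, hy, rfl⟩
    exact Subgroup.mul_mem_sup hx hy

namespace IwasawaFactor

variable {p q : ℕ} {ζ : (ZMod q)ˣ}

def zetaPow (ζ : (ZMod q)ˣ) (k : ZMod p) : (ZMod q)ˣ := ζ ^ k.val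

@[simp] lemma zetaPow_zero : zetaPow ζ (0 : ZMod p) = 1 := by
  simp [zetaPow]

lemma zetaPow_one (hζ : orderOf ζ = p) : zetaPow ζ (1 : ZMod p) = ζ := by
  subst hζ
  rw [zetaPow, ZMod.val_one_eq_one_mod, pow_mod_orderOf, pow_one]

lemma zetaPow_add [NeZero p] (hζ : orderOf ζ = p) (k l : ZMod p) :
    zetaPow ζ (k + l) = zetaPow ζ k * zetaPow ζ l := by
  subst hζ
  rw [zetaPow, zetaPow, zetaPow, ZMod.val_add, ← pow_add, pow_mod_orderOf]

lemma zetaPow_injective [NeZero p] (hζ : orderOf ζ = p) :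
    Function.Injective (zetaPow ζ : ZMod p → _) := by
  intro k l hkl
  subst hζ
  exact ZMod.val_injective _ <|
    pow_injOn_Iio_orderOf (Set.mem_Iio.2 k.val_lt) (Set.mem_Iio.2 l.val_lt) hkl

lemma zetaPow_eq_one_iff [NeZero p] (hζ : orderOf ζ = p) {k : ZMod p} :
    zetaPow ζ k = 1 ↔ k = 0 :=
  (zetaPow_injective hζ).eq_iff' zetaPow_zero

lemma one_sub_zeta_ne_zero (hp : p ≠ 1) (hζ : orderOf ζ = p) : 1 - (ζ : ZMod q) ≠ 0 := by
  rw [sub_ne_zero, ne_comm, Ne, Units.val_eq_one, ← orderOf_eq_one_iff, hζ]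
  exact hp

variable {V : Type*} [AddCommGroup V] {φ : Multiplicative (ZMod p) →* MulAut (Multiplicative V)}

local notation "G" => Multiplicative V ⋊[φ] Multiplicative (ZMod p)

def cocycle (ζ : (ZMod q)ˣ) (g : G) : V × ZMod q :=
  (g.left.toAdd, 1 - zetaPow ζ g.right.toAdd)

lemma cocycle_one : cocycle ζ (1 : G) = 0 := by
  simp [cocycle]

lemma cocycle_inl (v : V) :
    cocycle ζ (SemidirectProduct.inl (Multiplicative.ofAdd v) : G) = (v, 0) := by
  simp [cocycle]

lemma cocycle_snd_eq_zero_iff [NeZero p] (hζ : orderOf ζ = p) {g : G} :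
    (cocycle ζ g).2 = 0 ↔ g.right.toAdd = 0 := by
  rw [cocycle, sub_eq_zero, eq_comm, Units.val_eq_one, zetaPow_eq_one_iff hζ]

lemma cocycle_injective [NeZero p] (hζ : orderOf ζ = p) :
    Function.Injective (cocycle ζ : G → _) := by
  intro g h hgh
  rw [cocycle, cocycle, Prod.mk.injEq, sub_right_inj, Units.val_inj] at hgh
  exact SemidirectProduct.ext hgh.1 (zetaPow_injective hζ hgh.2)

variable [Module (ZMod q) V]

def ActsAsScalar (φ : Multiplicative (ZMod p) →* MulAut (Multiplicative V))
    (ζ : (ZMod q)ˣ) : Prop :=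
  ∀ v : V, φ (Multiplicative.ofAdd 1) (Multiplicative.ofAdd v) =
    Multiplicative.ofAdd ((ζ : ZMod q) • v)

lemma action_eq [NeZero p] (hφ : ActsAsScalar φ ζ) (k : ZMod p) (v : V) :
    φ (Multiplicative.ofAdd k) (Multiplicative.ofAdd v) =
      Multiplicative.ofAdd ((zetaPow ζ k : ZMod q) • v) := by
  have hpow : ∀ (n : ℕ) (v : V), (φ (Multiplicative.ofAdd 1) ^ n) (Multiplicative.ofAdd v) =
      Multiplicative.ofAdd ((ζ : ZMod q) ^ n • v) := by
    intro n
    induction n with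
    | zero => simp
    | succ n ih => intro v; rw [pow_succ', MulAut.mul_apply, ih, hφ, pow_succ', mul_smul]
  have hk : Multiplicative.ofAdd k = Multiplicative.ofAdd (1 : ZMod p) ^ k.val := by
    rw [← ofAdd_nsmul, nsmul_one, ZMod.natCast_zmod_val]
  rw [hk, map_pow, hpow, zetaPow, Units.val_pow_eq_pow_val]

lemma cocycle_mul [NeZero p] (hζ : orderOf ζ = p) (hφ : ActsAsScalar φ ζ) (g h : G) :
    cocycle ζ (g * h) = cocycle ζ g + (zetaPow ζ g.right.toAdd : ZMod q) • cocycle ζ h := by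
  simp only [cocycle, SemidirectProduct.mul_left, SemidirectProduct.mul_right, toAdd_mul]
  have hact := action_eq hφ g.right.toAdd h.left.toAdd
  rw [ofAdd_toAdd, ofAdd_toAdd] at hact
  rw [hact, toAdd_ofAdd, zetaPow_add hζ, Units.val_mul]
  ext <;> simp only [Prod.fst_add, Prod.snd_add, Prod.smul_fst, Prod.smul_snd, smul_eq_mul]
  ring

lemma cocycle_inv [NeZero p] (hζ : orderOf ζ = p) (hφ : ActsAsScalar φ ζ) (g : G) :
    cocycle ζ g⁻¹ = -(zetaPow ζ g⁻¹.right.toAdd : ZMod q) • cocycle ζ g := by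
  have h := cocycle_mul hζ hφ g⁻¹ g
  rw [inv_mul_cancel, cocycle_one] at h
  rw [neg_smul]
  exact eq_neg_of_add_eq_zero_left h.symm

lemma cocycle_pow [NeZero p] (hζ : orderOf ζ = p) (hφ : ActsAsScalar φ ζ)
    {g : G} (hg : g.right.toAdd = 1) {u : V}
    (hu : cocycle ζ g = (1 - (ζ : ZMod q)) • (u, 1)) (n : ℕ) :
    cocycle ζ (g ^ n) = (1 - (ζ : ZMod q) ^ n) • (u, 1) := by
  induction n with
  | zero => rw [pow_zero, pow_zero, sub_self, zero_smul, cocycle_one]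
  | succ n ih =>
    rw [pow_succ', cocycle_mul hζ hφ, hg, zetaPow_one hζ, hu, ih, smul_smul, ← add_smul]
    congr 1
    ring

lemma exists_smul_cocycle_eq [Fact q.Prime] (hp : p ≠ 1) (hζ : orderOf ζ = p)
    (z : V × ZMod q) :
    ∃ a : ZMod q, a ≠ 0 ∧ ∃ g : G, a • cocycle ζ g = z := by
  rcases eq_or_ne z.2 0 with hz | hz
  · exact ⟨1, one_ne_zero, SemidirectProduct.inl (Multiplicative.ofAdd z.1), by
      rw [cocycle_inl, one_smul, ← hz]⟩
  · have hζ1 := one_sub_zeta_ne_zero hp hζ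
    set a := z.2 / (1 - (ζ : ZMod q))
    have ha : a ≠ 0 := div_ne_zero hz hζ1
    refine ⟨a, ha, ⟨Multiplicative.ofAdd (a⁻¹ • z.1), Multiplicative.ofAdd 1⟩, ?_⟩
    rw [cocycle, toAdd_ofAdd, toAdd_ofAdd, zetaPow_one hζ, Prod.smul_mk, smul_inv_smul₀ ha,
      smul_eq_mul, div_mul_cancel₀ _ hζ1]

lemma eq_inl_of_toAdd_right_eq_zero {g : G} (hg : g.right.toAdd = 0) :
    g = SemidirectProduct.inl (Multiplicative.ofAdd g.left.toAdd) :=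
  SemidirectProduct.ext rfl hg

def leftSubmodule (S : Subgroup G) : Submodule (ZMod q) V :=
  AddSubgroup.toZModSubmodule q (Subgroup.toAddSubgroup' (S.comap SemidirectProduct.inl))

lemma mem_leftSubmodule {S : Subgroup G} {v : V} :
    v ∈ (leftSubmodule S : Submodule (ZMod q) V) ↔
      SemidirectProduct.inl (Multiplicative.ofAdd v) ∈ S :=
  Iff.rfl

def toSubgroup [NeZero p] (hζ : orderOf ζ = p) (hφ : ActsAsScalar φ ζ)
    (M : Submodule (ZMod q) (V × ZMod q)) : Subgroup G where
  carrier := cocycle ζ ⁻¹' M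
  one_mem' := by rw [Set.mem_preimage, cocycle_one]; exact M.zero_mem
  mul_mem' {g h} hg hh := by
    rw [Set.mem_preimage, cocycle_mul hζ hφ]
    exact M.add_mem hg (M.smul_mem _ hh)
  inv_mem' {g} hg := by
    rw [Set.mem_preimage, cocycle_inv hζ hφ]
    exact M.smul_mem _ hg

variable [NeZero p] {hζ : orderOf ζ = p} {hφ : ActsAsScalar φ ζ}

lemma mem_toSubgroup {M : Submodule (ZMod q) (V × ZMod q)} {g : G} :
    g ∈ toSubgroup hζ hφ M ↔ cocycle ζ g ∈ M :=
  Iff.rfl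

lemma toSubgroup_le_toSubgroup_iff [Fact q.Prime] (hp : p ≠ 1)
    {M N : Submodule (ZMod q) (V × ZMod q)} :
    toSubgroup hζ hφ M ≤ toSubgroup hζ hφ N ↔ M ≤ N := by
  refine ⟨fun hMN z hz => ?_, fun hMN g hg => hMN hg⟩
  obtain ⟨a, ha, g, rfl⟩ := exists_smul_cocycle_eq (V := V) (φ := φ) hp hζ z
  have hg : g ∈ toSubgroup hζ hφ M := by
    rw [mem_toSubgroup, ← inv_smul_smul₀ ha (cocycle ζ g)]
    exact M.smul_mem _ hz
  exact N.smul_mem a (hMN hg)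

lemma toSubgroup_prod_bot_eq {S : Subgroup G} (hS : ∀ g ∈ S, g.right.toAdd = 0) :
    toSubgroup hζ hφ ((leftSubmodule S).prod ⊥) = S := by
  ext g
  rw [mem_toSubgroup, Submodule.mem_prod, Submodule.mem_bot, mem_leftSubmodule,
    cocycle_snd_eq_zero_iff hζ]
  constructor
  · rintro ⟨hmem, hg0⟩
    rwa [eq_inl_of_toAdd_right_eq_zero hg0]
  · intro hg
    have hg0 := hS g hg
    exact ⟨eq_inl_of_toAdd_right_eq_zero hg0 ▸ hg, hg0⟩

lemma toSubgroup_comap_eq {S : Subgroup G} {g : G} (hg : g ∈ S) (hg1 : g.right.toAdd = 1) {u : V}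
    (hu : cocycle ζ g = (1 - (ζ : ZMod q)) • (u, 1)) :
    toSubgroup hζ hφ ((leftSubmodule S).comap
      (LinearMap.fst (ZMod q) V (ZMod q) - (LinearMap.snd (ZMod q) V (ZMod q)).smulRight u)) =
      S := by
  ext h
  set x := h.left.toAdd - (1 - (zetaPow ζ h.right.toAdd : ZMod q)) • u
  have hh : SemidirectProduct.inl (Multiplicative.ofAdd x) * g ^ h.right.toAdd.val = h := by
    refine cocycle_injective hζ ?_
    rw [cocycle_mul hζ hφ, cocycle_inl, cocycle_pow hζ hφ hg1 hu, SemidirectProduct.right_inl,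
      toAdd_one, zetaPow_zero, Units.val_one, one_smul]
    ext <;> simp [cocycle, x, zetaPow]
  rw [mem_toSubgroup, Submodule.mem_comap, mem_leftSubmodule]
  conv_rhs => rw [← hh, S.mul_mem_cancel_right (S.pow_mem hg _)]
  rfl

lemma exists_mem_toAdd_right_eq_one [Fact p.Prime] {S : Subgroup G} {g : G} (hg : g ∈ S)
    (hg0 : g.right.toAdd ≠ 0) : ∃ g ∈ S, g.right.toAdd = 1 := by
  refine ⟨g ^ (g.right.toAdd⁻¹).val, S.pow_mem hg _, ?_⟩
  rw [← SemidirectProduct.rightHom_eq_right, map_pow, toAdd_pow,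
    SemidirectProduct.rightHom_eq_right, nsmul_eq_mul, ZMod.natCast_zmod_val, inv_mul_cancel₀ hg0]

lemma toSubgroup_surjective [Fact p.Prime] [Fact q.Prime] :
    Function.Surjective (toSubgroup hζ hφ) := by
  intro S
  by_cases hS : ∀ g ∈ S, g.right.toAdd = 0
  · exact ⟨_, toSubgroup_prod_bot_eq hS⟩
  push Not at hS
  obtain ⟨g₀, hg₀, hg₀0⟩ := hS
  obtain ⟨g, hg, hg1⟩ := exists_mem_toAdd_right_eq_one hg₀ hg₀0
  have hζ1 := one_sub_zeta_ne_zero (Fact.out : p.Prime).ne_one hζ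
  refine ⟨_, toSubgroup_comap_eq hg hg1 (u := (1 - (ζ : ZMod q))⁻¹ • g.left.toAdd) ?_⟩
  rw [cocycle, hg1, zetaPow_one hζ, Prod.smul_mk, smul_inv_smul₀ hζ1, smul_eq_mul, mul_one]

variable (hζ hφ) in
noncomputable def subgroupOrderIso [Fact p.Prime] [Fact q.Prime] :
    Submodule (ZMod q) (V × ZMod q) ≃o Subgroup G :=
  OrderIso.ofSurjective
    (OrderEmbedding.ofMapLEIff (toSubgroup hζ hφ)
      fun _ _ => toSubgroup_le_toSubgroup_iff (Fact.out : p.Prime).ne_one)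
    (toSubgroup_surjective (hζ := hζ) (hφ := hφ))

lemma toSubgroup_sup [Fact p.Prime] [Fact q.Prime] (M N : Submodule (ZMod q) (V × ZMod q)) :
    toSubgroup hζ hφ (M ⊔ N) = toSubgroup hζ hφ M ⊔ toSubgroup hζ hφ N :=
  (subgroupOrderIso hζ hφ).map_sup M N

lemma isModularLattice_subgroup [Fact p.Prime] [Fact q.Prime] (hζ : orderOf ζ = p)
    (hφ : ActsAsScalar φ ζ) : IsModularLattice (Subgroup G) :=
  (subgroupOrderIso hζ hφ).isModularLattice

variable (hζ hφ) in
lemma inl_mem_sup [Fact p.Prime] [Fact q.Prime] (w : V) :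
    SemidirectProduct.inl (Multiplicative.ofAdd w) ∈
      toSubgroup hζ hφ (Submodule.span (ZMod q) {(w, 1)}) ⊔
        toSubgroup hζ hφ (Submodule.span (ZMod q) {(0, 1)}) := by
  rw [← toSubgroup_sup, mem_toSubgroup, cocycle_inl, Submodule.mem_sup]
  exact ⟨(w, 1), Submodule.mem_span_singleton_self _, -(0, 1),
    neg_mem (Submodule.mem_span_singleton_self _), by simp⟩

variable (hζ hφ) in
lemma inl_notMem_mul [Fact q.Prime] {w : V} (hw : w ≠ 0) :
    SemidirectProduct.inl (Multiplicative.ofAdd w) ∉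
      (toSubgroup hζ hφ (Submodule.span (ZMod q) {(w, 1)}) : Set G) *
        toSubgroup hζ hφ (Submodule.span (ZMod q) {(0, 1)}) := by
  rintro ⟨x, hx, y, hy, hxy⟩
  obtain ⟨a, ha⟩ := Submodule.mem_span_singleton.mp (mem_toSubgroup.mp hx)
  obtain ⟨b, hb⟩ := Submodule.mem_span_singleton.mp (mem_toSubgroup.mp hy)
  have hc := congrArg (cocycle ζ) hxy
  rw [cocycle_mul hζ hφ, ← ha, ← hb, cocycle_inl] at hc
  have hfst : (1 - a) • w = 0 := by
    have haw : a • w = w := by simpa using congrArg Prod.fst hc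
    rw [sub_smul, one_smul, haw, sub_self]
  have hsnd : 1 - a = zetaPow ζ x.right.toAdd := by
    have : a = 1 - zetaPow ζ x.right.toAdd := by simpa [cocycle] using congrArg Prod.snd ha
    rw [this, sub_sub_cancel]
  rw [hsnd, smul_eq_zero] at hfst
  exact hw (hfst.resolve_left (Units.ne_zero _))

end IwasawaFactor

theorem stmt18_general (p q : ℕ) (hp : p.Prime) (hq : q.Prime)
    (ζ : (ZMod q)ˣ) (hζ : orderOf ζ = p)
    (V : Type*) [AddCommGroup V] [Module (ZMod q) V] [Nontrivial V]
    (φ : Multiplicative (ZMod p) →* MulAut (Multiplicative V))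
    (hφ : ∀ v : V,
      φ (Multiplicative.ofAdd (1 : ZMod p)) (Multiplicative.ofAdd v) =
        Multiplicative.ofAdd ((ζ : ZMod q) • v)) :
    (∀ X Y Z : Subgroup (Multiplicative V ⋊[φ] Multiplicative (ZMod p)),
        X ≤ Z → X ⊔ (Y ⊓ Z) = (X ⊔ Y) ⊓ Z) ∧
    (∃ X Y : Subgroup (Multiplicative V ⋊[φ] Multiplicative (ZMod p)),
        (X : Set (Multiplicative V ⋊[φ] Multiplicative (ZMod p))) * (Y : Set _) ≠
          (Y : Set (Multiplicative V ⋊[φ] Multiplicative (ZMod p))) * (X : Set _)) := by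
  have := Fact.mk hp
  have := Fact.mk hq
  have := IwasawaFactor.isModularLattice_subgroup hζ hφ
  refine ⟨fun X Y Z hXZ => (sup_inf_assoc_of_le Y hXZ).symm, ?_⟩
  obtain ⟨w, hw⟩ := exists_ne (0 : V)
  refine ⟨IwasawaFactor.toSubgroup hζ hφ (Submodule.span (ZMod q) {(w, 1)}),
    IwasawaFactor.toSubgroup hζ hφ (Submodule.span (ZMod q) {(0, 1)}), fun hXY => ?_⟩
  refine IwasawaFactor.inl_notMem_mul hζ hφ hw ?_
  rw [← Subgroup.coe_sup_of_mul_comm hXY]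
  exact IwasawaFactor.inl_mem_sup hζ hφ w

/-- Let `p, q` be primes with `p ∣ q − 1`, let `ζ` be an element of order `p` in
`(ℤ/qℤ)ˣ`, let `V` be a nontrivial vector space over `ℤ/qℤ`, and let
`G = V ⋊ ℤ/pℤ` be the semidirect product in which the generator `1` of `ℤ/pℤ` acts on `V`
by scalar multiplication by `ζ`.  Then the lattice of subgroups of `G` is modular, but `G`
is not quasihamiltonian: some subgroups `X`, `Y` satisfy `X·Y ≠ Y·X` as sets. -/
theorem stmt18 (p q : ℕ) (hp : p.Prime) (hq : q.Prime) (hpq : p ∣ q - 1)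
    (ζ : (ZMod q)ˣ) (hζ : orderOf ζ = p)
    (V : Type*) [AddCommGroup V] [Module (ZMod q) V] [Nontrivial V]
    (φ : Multiplicative (ZMod p) →* MulAut (Multiplicative V))
    (hφ : ∀ v : V,
      φ (Multiplicative.ofAdd (1 : ZMod p)) (Multiplicative.ofAdd v) =
        Multiplicative.ofAdd ((ζ : ZMod q) • v)) :
    (∀ X Y Z : Subgroup (Multiplicative V ⋊[φ] Multiplicative (ZMod p)),
        X ≤ Z → X ⊔ (Y ⊓ Z) = (X ⊔ Y) ⊓ Z) ∧
    (∃ X Y : Subgroup (Multiplicative V ⋊[φ] Multiplicative (ZMod p)),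
        (X : Set (Multiplicative V ⋊[φ] Multiplicative (ZMod p))) * (Y : Set _) ≠
          (Y : Set (Multiplicative V ⋊[φ] Multiplicative (ZMod p))) * (X : Set _)) :=
  stmt18_general p q hp hq ζ hζ V φ hφ
end

section
/- (Mukhin's example) Let p be a prime, let E = ℤ/pℤ, and let G = E^{(ℕ)} × E^{ℕ} be the direct product of the direct sum E^{(ℕ)} = ⨁_{i∈ℕ} E equipped with the discrete topology and the full cartesian power E^{ℕ} = ∏_{i∈ℕ} E equipped with the product topology (each factor E discrete). Then G is a locally compact abelian topological group whose lattice of closed subgroups is not modular: there exist closed subgroups X, Y, Z of G with X ⊆ Z such that cl⟨X ∪ (Y ∩ Z)⟩ ≠ cl⟨X ∪ Y⟩ ∩ Z, where cl⟨S⟩ denotes the closure of the subgroup generated by S. -/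
/-!
Write `A = E^{(ℕ)}`, `B = E^ℕ` and let `f : A → B` be the inclusion. Take `X = A × 0`,
`Y = graph f` and `Z = A × C` with `C` the constant sequences. A finitely supported constant
sequence vanishes, so `Y ∩ Z ⊆ X` and the left-hand side is `X`. On the other hand
`X + Y = A × f(A)` and `f(A)` is dense in `B`, so the right-hand side is all of `Z`.
-/

/-- The direct sum `⨁_{i∈ℕ} ℤ/pℤ` carries the discrete topology. -/
instance (p : ℕ) : TopologicalSpace (DirectSum ℕ (fun _ => ZMod p)) := ⊥

instance (p : ℕ) : DiscreteTopology (DirectSum ℕ (fun _ => ZMod p)) := ⟨rfl⟩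

open Filter

namespace AddMonoidHom

variable {A B : Type*} [AddCommGroup A] [AddCommGroup B]

theorem prod_top_bot_sup_graph (f : A →+ B) :
    (⊤ : AddSubgroup A).prod ⊥ ⊔ f.graph = (⊤ : AddSubgroup A).prod f.range := by
  refine le_antisymm (sup_le (AddSubgroup.prod_mono le_rfl bot_le) ?_) ?_
  · rintro ⟨a, b⟩ hab
    exact ⟨trivial, a, hab⟩
  · rintro ⟨a, _⟩ ⟨-, x, rfl⟩
    have hX : (a - x, (0 : B)) ∈ (⊤ : AddSubgroup A).prod ⊥ := ⟨trivial, rfl⟩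
    have hY : (x, f x) ∈ f.graph := rfl
    simpa using add_mem (AddSubgroup.mem_sup_left hX) (AddSubgroup.mem_sup_right hY)

theorem graph_inf_prod_le {f : A →+ B} {C : AddSubgroup B} (h : Disjoint C f.range) :
    f.graph ⊓ (⊤ : AddSubgroup A).prod C ≤ (⊤ : AddSubgroup A).prod ⊥ := by
  rintro ⟨a, b⟩ ⟨hab, -, hb⟩
  exact ⟨trivial, (AddSubgroup.disjoint_def.1 h) hb ⟨a, hab⟩⟩

end AddMonoidHom

section TopologicalGroup

variable {A B : Type*} [AddCommGroup A] [AddCommGroup B] [TopologicalSpace A]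
  [TopologicalSpace B] [IsTopologicalAddGroup A] [IsTopologicalAddGroup B]

theorem AddSubgroup.topologicalClosure_top_prod_eq_top {H : AddSubgroup B}
    (hH : Dense (H : Set B)) : ((⊤ : AddSubgroup A).prod H).topologicalClosure = ⊤ := by
  refine SetLike.ext' ?_
  rw [AddSubgroup.topologicalClosure_coe, AddSubgroup.coe_prod, closure_prod_eq, hH.closure_eq]
  simp

theorem IsClosed.addSubgroup_topologicalClosure_eq {H : AddSubgroup A}
    (hH : IsClosed (H : Set A)) : H.topologicalClosure = H :=
  SetLike.ext' hH.closure_eq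

theorem exists_isClosed_addSubgroup_not_modular_of_denseRange [T2Space B] {f : A →+ B}
    (hf : Continuous f) (hdense : DenseRange f) {C : AddSubgroup B} (hC : IsClosed (C : Set B)) (hC0 : C ≠ ⊥)
    (hdisj : Disjoint C f.range) :
    ∃ X Y Z : AddSubgroup (A × B), IsClosed (X : Set (A × B)) ∧ IsClosed (Y : Set (A × B)) ∧
      IsClosed (Z : Set (A × B)) ∧ X ≤ Z ∧
      (X ⊔ (Y ⊓ Z)).topologicalClosure ≠ (X ⊔ Y).topologicalClosure ⊓ Z := by
  have hX : IsClosed (((⊤ : AddSubgroup A).prod ⊥ : AddSubgroup (A × B)) : Set (A × B)) := by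
    rw [AddSubgroup.coe_prod, AddSubgroup.coe_bot]
    exact isClosed_univ.prod isClosed_singleton
  have hY : IsClosed (f.graph : Set (A × B)) :=
    isClosed_eq (hf.comp continuous_fst) continuous_snd
  have hZ : IsClosed (((⊤ : AddSubgroup A).prod C : AddSubgroup (A × B)) : Set (A × B)) := by
    rw [AddSubgroup.coe_prod]
    exact isClosed_univ.prod hC
  refine ⟨_, _, _, hX, hY, hZ, AddSubgroup.prod_mono le_rfl bot_le, ?_⟩
  have hrange : Dense (f.range : Set B) := by rwa [AddMonoidHom.coe_range]
  rw [sup_eq_left.2 (AddMonoidHom.graph_inf_prod_le hdisj), f.prod_top_bot_sup_graph,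
    AddSubgroup.topologicalClosure_top_prod_eq_top hrange, top_inf_eq,
    hX.addSubgroup_topologicalClosure_eq]
  intro h
  refine hC0 (eq_bot_iff.2 fun b hb => ?_)
  have : ((0 : A), b) ∈ (⊤ : AddSubgroup A).prod ⊥ := h ▸ ⟨trivial, hb⟩
  exact this.2

end TopologicalGroup

theorem DFinsupp.denseRange_coeFn {ι : Type*} {β : ι → Type*} [∀ i, Zero (β i)]
    [∀ i, TopologicalSpace (β i)] : DenseRange (fun f : Π₀ i, β i => ⇑f) := by
  classical
  intro b
  refine mem_closure_of_tendsto (f := fun s : Finset ι => DFinsupp.mk s fun i => b i)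
    (b := atTop) ?_ (Eventually.of_forall fun s => Set.mem_range_self _)
  refine tendsto_pi_nhds.2 fun i => tendsto_nhds_of_eventually_eq ?_
  filter_upwards [eventually_ge_atTop {i}] with s hs
  simp [DFinsupp.mk_apply, Finset.singleton_subset_iff.1 hs]

theorem isClosed_range_const {ι E : Type*} [TopologicalSpace E] [T2Space E] [Nonempty ι] :
    IsClosed (Set.range (Function.const ι : E → ι → E)) := by
  obtain ⟨i₀⟩ := ‹Nonempty ι›
  have : Set.range (Function.const ι : E → ι → E) = ⋂ i, {b | b i = b i₀} := by
    ext b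
    simp only [Set.mem_range, Set.mem_iInter, Set.mem_ofPred_eq]
    exact ⟨by rintro ⟨e, rfl⟩ i; rfl, fun h => ⟨b i₀, funext fun i => (h i).symm⟩⟩
  rw [this]
  exact isClosed_iInter fun i => isClosed_eq (continuous_apply i) (continuous_apply i₀)

theorem disjoint_range_const_range_coeFn {ι E : Type*} [Infinite ι] [AddCommGroup E] :
    Disjoint (Pi.constAddMonoidHom ι E).range
      (DFinsupp.coeFnAddMonoidHom : (Π₀ _ : ι, E) →+ ι → E).range := by
  classical
  refine AddSubgroup.disjoint_def.2 ?_
  rintro _ ⟨e, rfl⟩ ⟨a, ha⟩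
  obtain ⟨i, hi⟩ := Infinite.exists_notMem_finset a.support
  have he : e = 0 := (congrFun ha i).symm.trans (DFinsupp.notMem_support_iff.1 hi)
  simp [he]

theorem exists_isClosed_addSubgroup_directSum_prod_pi_not_modular {ι E : Type*} [Infinite ι]
    [AddCommGroup E] [Nontrivial E] [TopologicalSpace E] [DiscreteTopology E]
    [TopologicalSpace (DirectSum ι fun _ => E)] [DiscreteTopology (DirectSum ι fun _ => E)] :
    ∃ X Y Z : AddSubgroup ((DirectSum ι fun _ => E) × (ι → E)),
      IsClosed (X : Set ((DirectSum ι fun _ => E) × (ι → E))) ∧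
      IsClosed (Y : Set ((DirectSum ι fun _ => E) × (ι → E))) ∧
      IsClosed (Z : Set ((DirectSum ι fun _ => E) × (ι → E))) ∧ X ≤ Z ∧
      (X ⊔ (Y ⊓ Z)).topologicalClosure ≠ (X ⊔ Y).topologicalClosure ⊓ Z := by
  have hC0 : (Pi.constAddMonoidHom ι E).range ≠ ⊥ := by
    obtain ⟨e, he⟩ := exists_ne (0 : E)
    obtain ⟨i⟩ : Nonempty ι := inferInstance
    rw [Ne, AddSubgroup.eq_bot_iff_forall]
    exact fun h => he (congrFun (h _ ⟨e, rfl⟩) i)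
  exact exists_isClosed_addSubgroup_not_modular_of_denseRange
    (f := (DFinsupp.coeFnAddMonoidHom : (DirectSum ι fun _ => E) →+ ι → E))
    continuous_of_discreteTopology DFinsupp.denseRange_coeFn isClosed_range_const hC0
    disjoint_range_const_range_coeFn

/-- (Mukhin's example) Let `p` be a prime, `E = ℤ/pℤ`, and
`G = E^{(ℕ)} × E^{ℕ}`, the product of the direct sum `⨁_{i∈ℕ} E` with the discrete
topology and the full cartesian power `∏_{i∈ℕ} E` with the product topology (each factor
discrete). Then `G` is a locally compact Hausdorff abelian topological group whose lattice
of closed subgroups is not modular: there are closed subgroups `X ⊆ Z` and `Y` with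
`cl⟨X ∪ (Y ∩ Z)⟩ ≠ cl⟨X ∪ Y⟩ ∩ Z`. -/
theorem stmt19 (p : ℕ) (hp : p.Prime) :
    LocallyCompactSpace (DirectSum ℕ (fun _ => ZMod p) × (ℕ → ZMod p)) ∧
    T2Space (DirectSum ℕ (fun _ => ZMod p) × (ℕ → ZMod p)) ∧
    IsTopologicalAddGroup (DirectSum ℕ (fun _ => ZMod p) × (ℕ → ZMod p)) ∧
    ∃ X Y Z : AddSubgroup (DirectSum ℕ (fun _ => ZMod p) × (ℕ → ZMod p)),
      IsClosed (X : Set (DirectSum ℕ (fun _ => ZMod p) × (ℕ → ZMod p))) ∧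
      IsClosed (Y : Set (DirectSum ℕ (fun _ => ZMod p) × (ℕ → ZMod p))) ∧
      IsClosed (Z : Set (DirectSum ℕ (fun _ => ZMod p) × (ℕ → ZMod p))) ∧
      X ≤ Z ∧
      (X ⊔ (Y ⊓ Z)).topologicalClosure ≠ (X ⊔ Y).topologicalClosure ⊓ Z := by
  have : Fact p.Prime := ⟨hp⟩
  exact ⟨inferInstance, inferInstance, inferInstance,
    exists_isClosed_addSubgroup_directSum_prod_pi_not_modular⟩
end
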